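/- arXiv:2410.20175 — 16 statements merged into one kernel-verified Lean document; each statement's English description precedes it below -/
import Mathlib

section
/- Let L be a Hom-associative algebra over 𝕂 and Ω a semigroup. Then: (1) the tensor product L ⊗ 𝕂Ω is a Hom-associative algebra with multiplication (x⊗α)·̄(y⊗β) = (x·y)⊗αβ and structure map p̄(x⊗α) = p(x)⊗α; (2) L, with structure map p and actions (x⊗α)·ₗy = x·y and y·ᵣ(x⊗β) = y·x, is a bimodule over L ⊗ 𝕂Ω; (3) the bilinear map Φ̂ : (L⊗𝕂Ω)×(L⊗𝕂Ω) → L given by Φ̂(x⊗α, y⊗β) = −x·y is a 2-cocycle of L ⊗ 𝕂Ω with coefficients in L; and (4) the family of maps {Id_α : L → L⊗𝕂Ω}_{α∈Ω} defined by Id_α(x) = x⊗α is a Φ̂-twisted Rota-Baxter family operator. -/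
open scoped TensorProduct

namespace TwistedRBAux

variable (K : Type*) [Field K] (Ω : Type*) [Semigroup Ω]
variable {L : Type*} [AddCommGroup L] [Module K L]

noncomputable def eps : MonoidAlgebra K Ω →ₗ[K] K :=
  Finsupp.lsum K (fun _ => LinearMap.id) ∘ₗ (MonoidAlgebra.coeffLinearEquiv K).toLinearMap

variable {K Ω} in
lemma eps_apply (a : MonoidAlgebra K Ω) : eps K Ω a = a.coeff.sum fun _ c => c := rfl

@[simp] lemma eps_single (α : Ω) (c : K) : eps K Ω (MonoidAlgebra.single α c) = c := by
  rw [eps_apply]; exact Finsupp.sum_single_index rfl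

lemma eps_mul (a b : MonoidAlgebra K Ω) :
    eps K Ω (a * b) = eps K Ω a * eps K Ω b := by
  rw [MonoidAlgebra.mul_def, map_finsuppSum]
  simp only [map_finsuppSum, eps_single]
  simp [eps_apply, Finsupp.sum_mul, Finsupp.mul_sum]
  rw [Finsupp.sum_comm]

@[simp] lemma single_one_mul_single_one (α β : Ω) :
    (MonoidAlgebra.single α (1:K)) * MonoidAlgebra.single β 1
      = MonoidAlgebra.single (α * β) (1:K) := by
  rw [MonoidAlgebra.single_mul_single, one_mul]

noncomputable def sigma : L ⊗[K] MonoidAlgebra K Ω →ₗ[K] L :=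
  (TensorProduct.rid K L).toLinearMap ∘ₗ TensorProduct.map LinearMap.id (eps K Ω)

@[simp] lemma sigma_tmul (x : L) (a : MonoidAlgebra K Ω) :
    sigma K Ω (x ⊗ₜ[K] a) = eps K Ω a • x := by
  simp [sigma]

variable (mul : L →ₗ[K] L →ₗ[K] L) (p : L →ₗ[K] L)

noncomputable def mT :
    (L ⊗[K] MonoidAlgebra K Ω) →ₗ[K] (L ⊗[K] MonoidAlgebra K Ω) →ₗ[K]
      (L ⊗[K] MonoidAlgebra K Ω) :=
  TensorProduct.curry
    ((TensorProduct.map (TensorProduct.lift mul) (LinearMap.mul' K (MonoidAlgebra K Ω))) ∘ₗ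
      (TensorProduct.tensorTensorTensorComm K L (MonoidAlgebra K Ω) L
        (MonoidAlgebra K Ω)).toLinearMap)

@[simp] lemma mT_tmul (x y : L) (a b : MonoidAlgebra K Ω) :
    mT K Ω mul (x ⊗ₜ[K] a) (y ⊗ₜ[K] b) = (mul x y) ⊗ₜ[K] (a * b) := by
  simp [mT, TensorProduct.curry_apply, TensorProduct.tensorTensorTensorComm_tmul,
    TensorProduct.map_tmul, TensorProduct.lift.tmul, LinearMap.mul'_apply]

noncomputable def pbT :
    (L ⊗[K] MonoidAlgebra K Ω) →ₗ[K] (L ⊗[K] MonoidAlgebra K Ω) :=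
  TensorProduct.map p LinearMap.id

@[simp] lemma pbT_tmul (x : L) (a : MonoidAlgebra K Ω) :
    pbT K Ω p (x ⊗ₜ[K] a) = (p x) ⊗ₜ[K] a := by
  simp [pbT]

noncomputable def lT : (L ⊗[K] MonoidAlgebra K Ω) →ₗ[K] L →ₗ[K] L :=
  mul ∘ₗ sigma K Ω

@[simp] lemma lT_tmul (x : L) (a : MonoidAlgebra K Ω) (y : L) :
    lT K Ω mul (x ⊗ₜ[K] a) y = eps K Ω a • mul x y := by
  simp [lT]

noncomputable def rT : L →ₗ[K] (L ⊗[K] MonoidAlgebra K Ω) →ₗ[K] L :=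
  (mul.flip ∘ₗ sigma K Ω).flip

@[simp] lemma rT_tmul (y x : L) (a : MonoidAlgebra K Ω) :
    rT K Ω mul y (x ⊗ₜ[K] a) = eps K Ω a • mul y x := by
  simp [rT]

noncomputable def PhiT :
    (L ⊗[K] MonoidAlgebra K Ω) →ₗ[K] (L ⊗[K] MonoidAlgebra K Ω) →ₗ[K] L :=
  -((mul ∘ₗ sigma K Ω).compl₂ (sigma K Ω))

@[simp] lemma PhiT_tmul (x y : L) (a b : MonoidAlgebra K Ω) :
    PhiT K Ω mul (x ⊗ₜ[K] a) (y ⊗ₜ[K] b)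
      = -(eps K Ω a • eps K Ω b • mul x y) := by
  simp [PhiT, LinearMap.compl₂_apply, smul_smul, mul_comm]

noncomputable def IdT (α : Ω) : L →ₗ[K] (L ⊗[K] MonoidAlgebra K Ω) :=
  (TensorProduct.mk K L (MonoidAlgebra K Ω)).flip (MonoidAlgebra.single α 1)

@[simp] lemma IdT_apply (α : Ω) (x : L) :
    IdT K Ω (α := α) x = x ⊗ₜ[K] MonoidAlgebra.single α (1:K) := rfl

lemma helper4 {M : Type*} [AddCommGroup M] {a b c d a' b' c' d' : M}
    (h1 : a - b - c + d = 0) (h2 : a' - b' - c' + d' = 0) :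
    (a + a') - (b + b') - (c + c') + (d + d') = 0 := by
  calc (a + a') - (b + b') - (c + c') + (d + d')
      = (a - b - c + d) + (a' - b' - c' + d') := by abel
    _ = 0 := by rw [h1, h2, add_zero]

end TwistedRBAux

open TwistedRBAux

/-- for a Hom-associative algebra `L` and a semigroup `Ω`:
(1) `L ⊗ 𝕂Ω` is a Hom-associative algebra with `(x⊗α)·̄(y⊗β) = (x·y)⊗αβ` and
`p̄(x⊗α) = p(x)⊗α`; (2) `L` (with structure map `p`) is a bimodule over `L ⊗ 𝕂Ω`
via `(x⊗α)·ₗy = x·y`, `y·ᵣ(x⊗β) = y·x`; (3) `Φ̂(x⊗α, y⊗β) = −x·y` is a 2-cocycle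
of `L ⊗ 𝕂Ω` with coefficients in `L`; (4) the family `Id_α(x) = x⊗α` is a
`Φ̂`-twisted Rota-Baxter family operator. -/
theorem tensor_semigroupAlgebra_twisted_RB_family
    {K : Type*} [Field K] [CharZero K] {Ω : Type*} [Semigroup Ω]
    {L : Type*} [AddCommGroup L] [Module K L]
    (mul : L →ₗ[K] L →ₗ[K] L) (p : L →ₗ[K] L)
    (hpm : ∀ x y, p (mul x y) = mul (p x) (p y))
    (hassoc : ∀ x y z, mul (p x) (mul y z) = mul (mul x y) (p z)) :
    ∃ (m : (L ⊗[K] MonoidAlgebra K Ω) →ₗ[K] (L ⊗[K] MonoidAlgebra K Ω) →ₗ[K]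
          (L ⊗[K] MonoidAlgebra K Ω))
      (pb : (L ⊗[K] MonoidAlgebra K Ω) →ₗ[K] (L ⊗[K] MonoidAlgebra K Ω))
      (l : (L ⊗[K] MonoidAlgebra K Ω) →ₗ[K] L →ₗ[K] L)
      (r : L →ₗ[K] (L ⊗[K] MonoidAlgebra K Ω) →ₗ[K] L)
      (Φ : (L ⊗[K] MonoidAlgebra K Ω) →ₗ[K] (L ⊗[K] MonoidAlgebra K Ω) →ₗ[K] L)
      (Id : Ω → L →ₗ[K] (L ⊗[K] MonoidAlgebra K Ω)),
      -- defining formulas on the generators x ⊗ α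
      (∀ (x y : L) (α β : Ω),
        m (x ⊗ₜ[K] MonoidAlgebra.single α 1) (y ⊗ₜ[K] MonoidAlgebra.single β 1)
          = (mul x y) ⊗ₜ[K] MonoidAlgebra.single (α * β) 1) ∧
      (∀ (x : L) (α : Ω),
        pb (x ⊗ₜ[K] MonoidAlgebra.single α 1) = (p x) ⊗ₜ[K] MonoidAlgebra.single α 1) ∧
      (∀ (x : L) (α : Ω) (y : L),
        l (x ⊗ₜ[K] MonoidAlgebra.single α 1) y = mul x y) ∧
      (∀ (y x : L) (β : Ω),
        r y (x ⊗ₜ[K] MonoidAlgebra.single β 1) = mul y x) ∧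
      (∀ (x : L) (α : Ω) (y : L) (β : Ω),
        Φ (x ⊗ₜ[K] MonoidAlgebra.single α 1) (y ⊗ₜ[K] MonoidAlgebra.single β 1)
          = -(mul x y)) ∧
      (∀ (α : Ω) (x : L), Id α x = x ⊗ₜ[K] MonoidAlgebra.single α 1) ∧
      -- (1) L ⊗ 𝕂Ω is a Hom-associative algebra
      (∀ X Y, pb (m X Y) = m (pb X) (pb Y)) ∧
      (∀ X Y Z, m (pb X) (m Y Z) = m (m X Y) (pb Z)) ∧
      -- (2) L is a bimodule over L ⊗ 𝕂Ω, with structure map p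
      (∀ X u, p (l X u) = l (pb X) (p u)) ∧
      (∀ u X, p (r u X) = r (p u) (pb X)) ∧
      (∀ u X Y, r (p u) (m X Y) = r (r u X) (pb Y)) ∧
      (∀ X u Y, l (pb X) (r u Y) = r (l X u) (pb Y)) ∧
      (∀ X Y u, l (pb X) (l Y u) = l (m X Y) (p u)) ∧
      -- (3) Φ̂ is a 2-cocycle of L ⊗ 𝕂Ω with coefficients in L
      (∀ X Y, p (Φ X Y) = Φ (pb X) (pb Y)) ∧
      (∀ X Y Z, l (pb X) (Φ Y Z) - r (Φ X Y) (pb Z) - Φ (m X Y) (pb Z)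
          + Φ (pb X) (m Y Z) = 0) ∧
      -- (4) {Id_α} is a Φ̂-twisted Rota-Baxter family operator
      (∀ (α : Ω) (u : L), Id α (p u) = pb (Id α u)) ∧
      (∀ (α β : Ω) (u v : L),
        m (Id α u) (Id β v)
          = Id (α * β) (l (Id α u) v + r u (Id β v) + Φ (Id α u) (Id β v))) := by
  refine ⟨mT K Ω mul, pbT K Ω p, lT K Ω mul, rT K Ω mul, PhiT K Ω mul, fun α => IdT K Ω α,
    ?_, ?_, ?_, ?_, ?_, ?_, ?_, ?_, ?_, ?_, ?_, ?_, ?_, ?_, ?_, ?_, ?_⟩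
  · -- m formula
    intro x y α β; simp
  · -- pb formula
    intro x α; simp
  · -- l formula
    intro x α y; simp
  · -- r formula
    intro y x β; simp
  · -- Φ formula
    intro x α y β; simp
  · -- Id formula
    intro α x; simp
  · -- (1a) multiplicativity of pb
    intro X Y
    induction X using TensorProduct.induction_on with
    | zero => simp
    | tmul x a =>
      induction Y using TensorProduct.induction_on with
      | zero => simp
      | tmul y b => simp [hpm]
      | add Y1 Y2 h1 h2 => simp only [map_add, LinearMap.map_add, h1, h2]
    | add X1 X2 h1 h2 => simp only [map_add, LinearMap.map_add, LinearMap.add_apply, h1, h2]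
  · -- (1b) Hom-associativity
    intro X Y Z
    induction X using TensorProduct.induction_on with
    | zero => simp
    | tmul x a =>
      induction Y using TensorProduct.induction_on with
      | zero => simp
      | tmul y b =>
        induction Z using TensorProduct.induction_on with
        | zero => simp
        | tmul z c => simp [hassoc, mul_assoc]
        | add Z1 Z2 h1 h2 => simp only [map_add, LinearMap.map_add, LinearMap.add_apply, h1, h2]
      | add Y1 Y2 h1 h2 => simp only [map_add, LinearMap.map_add, LinearMap.add_apply, h1, h2]
    | add X1 X2 h1 h2 => simp only [map_add, LinearMap.map_add, LinearMap.add_apply, h1, h2]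
  · -- (2a)
    intro X u
    induction X using TensorProduct.induction_on with
    | zero => simp
    | tmul x a => simp [hpm]
    | add X1 X2 h1 h2 => simp only [map_add, LinearMap.add_apply, h1, h2]
  · -- (2b)
    intro u X
    induction X using TensorProduct.induction_on with
    | zero => simp
    | tmul x a => simp [hpm]
    | add X1 X2 h1 h2 => simp only [map_add, LinearMap.map_add, LinearMap.add_apply, h1, h2]
  · -- (2c)
    intro u X Y
    induction X using TensorProduct.induction_on with
    | zero => simp
    | tmul x a =>
      induction Y using TensorProduct.induction_on with
      | zero => simp
      | tmul y b =>
        simp [eps_mul, smul_smul, hassoc, mul_comm]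
      | add Y1 Y2 h1 h2 => simp only [map_add, LinearMap.map_add, LinearMap.add_apply, h1, h2]
    | add X1 X2 h1 h2 => simp only [map_add, LinearMap.map_add, LinearMap.add_apply, h1, h2]
  · -- (2d)
    intro X u Y
    induction X using TensorProduct.induction_on with
    | zero => simp
    | tmul x a =>
      induction Y using TensorProduct.induction_on with
      | zero => simp
      | tmul y b =>
        simp [smul_smul, hassoc, mul_comm]
      | add Y1 Y2 h1 h2 => simp only [map_add, LinearMap.map_add, LinearMap.add_apply, h1, h2]
    | add X1 X2 h1 h2 => simp only [map_add, LinearMap.map_add, LinearMap.add_apply, h1, h2]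
  · -- (2e)
    intro X Y u
    induction X using TensorProduct.induction_on with
    | zero => simp
    | tmul x a =>
      induction Y using TensorProduct.induction_on with
      | zero => simp
      | tmul y b =>
        simp [eps_mul, smul_smul, hassoc, mul_comm]
      | add Y1 Y2 h1 h2 => simp only [map_add, LinearMap.map_add, LinearMap.add_apply, h1, h2]
    | add X1 X2 h1 h2 => simp only [map_add, LinearMap.map_add, LinearMap.add_apply, h1, h2]
  · -- (3a)
    intro X Y
    induction X using TensorProduct.induction_on with
    | zero => simp
    | tmul x a =>
      induction Y using TensorProduct.induction_on with
      | zero => simp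
      | tmul y b => simp [hpm]
      | add Y1 Y2 h1 h2 => simp only [map_add, LinearMap.map_add, LinearMap.add_apply, h1, h2]
    | add X1 X2 h1 h2 => simp only [map_add, LinearMap.map_add, LinearMap.add_apply, h1, h2]
  · -- (3b) cocycle identity
    intro X Y Z
    induction X using TensorProduct.induction_on with
    | zero => simp
    | tmul x a =>
      induction Y using TensorProduct.induction_on with
      | zero => simp
      | tmul y b =>
        induction Z using TensorProduct.induction_on with
        | zero => simp
        | tmul z c =>
          simp [eps_mul, smul_smul, hpm, hassoc, mul_comm, mul_left_comm]
        | add Z1 Z2 h1 h2 =>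
          simp only [map_add, LinearMap.map_add, LinearMap.add_apply]
          exact helper4 h1 h2
      | add Y1 Y2 h1 h2 =>
        simp only [map_add, LinearMap.map_add, LinearMap.add_apply]
        exact helper4 h1 h2
    | add X1 X2 h1 h2 =>
      simp only [map_add, LinearMap.map_add, LinearMap.add_apply]
      exact helper4 h1 h2
  · -- (4a)
    intro α u; simp
  · -- (4b)
    intro α β u v
    simp [smul_smul]
end

section
/- Let (L,·,p) be a Hom-associative algebra over 𝕂, (V,·ₗ,·ᵣ,q) a bimodule over it, Φ a 2-cocycle of L with coefficients in V, and {R_α: V → L}_{α∈Ω} a Φ-twisted Rota-Baxter family operator. Equip L ⊗ 𝕂Ω with the Hom-associative structure (x⊗α)·̄(y⊗β) = (x·y)⊗αβ, p̄(x⊗α) = p(x)⊗α, make V ⊗ 𝕂Ω a bimodule over it via (x⊗α)·̄ₗ(u⊗β) = (x·ₗu)⊗αβ and (u⊗β)·̄ᵣ(x⊗α) = (u·ᵣx)⊗βα, with structure map q̄(u⊗α) = q(u)⊗α, and let Φ̄(x⊗α, y⊗β) = Φ(x,y)⊗αβ, which is a 2-cocycle of L⊗𝕂Ω with coefficients in V⊗𝕂Ω.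 Then the single linear map R̄: V⊗𝕂Ω → L⊗𝕂Ω defined by R̄(u⊗α) = R_α(u)⊗α satisfies R̄∘q̄ = p̄∘R̄ and R̄(U)·̄R̄(W) = R̄(R̄(U)·̄ₗW + U·̄ᵣR̄(W) + Φ̄(R̄(U), R̄(W))) for all U,W ∈ V⊗𝕂Ω; i.e., R̄ is a Φ̄-twisted Rota-Baxter operator. -/
open scoped TensorProduct

section Helpers

variable {K : Type*} [Field K] {Ω : Type*} [Semigroup Ω]

/-- Auxiliary: the bilinear map on tensor products induced by two bilinear maps. -/
noncomputable def tmap₂ {M N P M' N' P' : Type*}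
    [AddCommMonoid M] [AddCommMonoid N] [AddCommMonoid P]
    [AddCommMonoid M'] [AddCommMonoid N'] [AddCommMonoid P']
    [Module K M] [Module K N] [Module K P] [Module K M'] [Module K N'] [Module K P']
    (f : M →ₗ[K] N →ₗ[K] P) (g : M' →ₗ[K] N' →ₗ[K] P') :
    (M ⊗[K] M') →ₗ[K] (N ⊗[K] N') →ₗ[K] (P ⊗[K] P') :=
  (TensorProduct.homTensorHomMap (RingHom.id K) N N' P P') ∘ₗ (TensorProduct.map f g)

lemma tmap₂_tmul {M N P M' N' P' : Type*}
    [AddCommMonoid M] [AddCommMonoid N] [AddCommMonoid P]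
    [AddCommMonoid M'] [AddCommMonoid N'] [AddCommMonoid P']
    [Module K M] [Module K N] [Module K P] [Module K M'] [Module K N'] [Module K P']
    (f : M →ₗ[K] N →ₗ[K] P) (g : M' →ₗ[K] N' →ₗ[K] P')
    (a : M) (b : M') (c : N) (d : N') :
    tmap₂ f g (a ⊗ₜ[K] b) (c ⊗ₜ[K] d) = f a c ⊗ₜ[K] g b d := by
  simp [tmap₂, TensorProduct.homTensorHomMap_apply]

/-- Every element of `M ⊗ 𝕂Ω` is built from pure tensors `x ⊗ single α 1` by addition. -/
theorem tensor_single_induction {M : Type*} [AddCommGroup M] [Module K M]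
    (P : M ⊗[K] (MonoidAlgebra K Ω) → Prop)
    (h0 : P 0)
    (hs : ∀ (x : M) (α : Ω), P (x ⊗ₜ[K] MonoidAlgebra.single α 1))
    (hadd : ∀ X Y, P X → P Y → P (X + Y)) :
    ∀ X, P X := by
  intro X
  induction X using TensorProduct.induction_on with
  | zero => exact h0
  | add X Y hX hY => exact hadd _ _ hX hY
  | tmul x a =>
    induction a using MonoidAlgebra.induction with
    | zero => simpa using h0
    | single_add α b f hα hb ih =>
      rw [TensorProduct.tmul_add]
      refine hadd _ _ ?_ ih
      have h1 : (MonoidAlgebra.single α b : MonoidAlgebra K Ω)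
          = b • MonoidAlgebra.single α (1 : K) := by
        rw [MonoidAlgebra.smul_single', mul_one]
      rw [h1, TensorProduct.tmul_smul, TensorProduct.smul_tmul']
      exact hs _ _

end Helpers

set_option maxHeartbeats 2000000 in
/-- a `Φ`-twisted Rota-Baxter family operator `{R_α : V → L}` induces a
single `Φ̄`-twisted Rota-Baxter operator `R̄ : V ⊗ 𝕂Ω → L ⊗ 𝕂Ω`, `R̄(u⊗α) = R_α(u)⊗α`,
where `L ⊗ 𝕂Ω` has the Hom-associative structure `(x⊗α)·̄(y⊗β) = (x·y)⊗αβ`,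
`V ⊗ 𝕂Ω` is a bimodule via `(x⊗α)·̄ₗ(u⊗β) = (x·ₗu)⊗αβ`, `(u⊗β)·̄ᵣ(x⊗α) = (u·ᵣx)⊗βα`,
and `Φ̄(x⊗α, y⊗β) = Φ(x,y)⊗αβ` is a 2-cocycle. -/
theorem twisted_RB_family_induces_twisted_RB_operator_on_tensor
    {K : Type*} [Field K] [CharZero K] {Ω : Type*} [Semigroup Ω]
    {L : Type*} [AddCommGroup L] [Module K L]
    {V : Type*} [AddCommGroup V] [Module K V]
    (mul : L →ₗ[K] L →ₗ[K] L) (p : L →ₗ[K] L)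
    (hpm : ∀ x y, p (mul x y) = mul (p x) (p y))
    (hassoc : ∀ x y z, mul (p x) (mul y z) = mul (mul x y) (p z))
    (ml : L →ₗ[K] V →ₗ[K] V) (mr : V →ₗ[K] L →ₗ[K] V) (q : V →ₗ[K] V)
    (hql : ∀ x u, q (ml x u) = ml (p x) (q u))
    (hqr : ∀ u x, q (mr u x) = mr (q u) (p x))
    (hb1 : ∀ u x y, mr (q u) (mul x y) = mr (mr u x) (p y))
    (hb2 : ∀ x u y, ml (p x) (mr u y) = mr (ml x u) (p y))
    (hb3 : ∀ x y u, ml (p x) (ml y u) = ml (mul x y) (q u))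
    (Φ : L →ₗ[K] L →ₗ[K] V)
    (hc1 : ∀ x y, q (Φ x y) = Φ (p x) (p y))
    (hc2 : ∀ x y z, ml (p x) (Φ y z) - mr (Φ x y) (p z) - Φ (mul x y) (p z)
        + Φ (p x) (mul y z) = 0)
    (R : Ω → V →ₗ[K] L)
    (hRq : ∀ (α : Ω) (u : V), R α (q u) = p (R α u))
    (hR : ∀ (α β : Ω) (u v : V),
      mul (R α u) (R β v)
        = R (α * β) (ml (R α u) v + mr u (R β v) + Φ (R α u) (R β v))) :
    ∃ (m : (L ⊗[K] MonoidAlgebra K Ω) →ₗ[K] (L ⊗[K] MonoidAlgebra K Ω) →ₗ[K]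
          (L ⊗[K] MonoidAlgebra K Ω))
      (pb : (L ⊗[K] MonoidAlgebra K Ω) →ₗ[K] (L ⊗[K] MonoidAlgebra K Ω))
      (lb : (L ⊗[K] MonoidAlgebra K Ω) →ₗ[K] (V ⊗[K] MonoidAlgebra K Ω) →ₗ[K]
          (V ⊗[K] MonoidAlgebra K Ω))
      (rb : (V ⊗[K] MonoidAlgebra K Ω) →ₗ[K] (L ⊗[K] MonoidAlgebra K Ω) →ₗ[K]
          (V ⊗[K] MonoidAlgebra K Ω))
      (qb : (V ⊗[K] MonoidAlgebra K Ω) →ₗ[K] (V ⊗[K] MonoidAlgebra K Ω))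
      (Φb : (L ⊗[K] MonoidAlgebra K Ω) →ₗ[K] (L ⊗[K] MonoidAlgebra K Ω) →ₗ[K]
          (V ⊗[K] MonoidAlgebra K Ω))
      (Rb : (V ⊗[K] MonoidAlgebra K Ω) →ₗ[K] (L ⊗[K] MonoidAlgebra K Ω)),
      -- defining formulas on generators
      (∀ (x y : L) (α β : Ω),
        m (x ⊗ₜ[K] MonoidAlgebra.single α 1) (y ⊗ₜ[K] MonoidAlgebra.single β 1)
          = (mul x y) ⊗ₜ[K] MonoidAlgebra.single (α * β) 1) ∧
      (∀ (x : L) (α : Ω),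
        pb (x ⊗ₜ[K] MonoidAlgebra.single α 1) = (p x) ⊗ₜ[K] MonoidAlgebra.single α 1) ∧
      (∀ (x : L) (α : Ω) (u : V) (β : Ω),
        lb (x ⊗ₜ[K] MonoidAlgebra.single α 1) (u ⊗ₜ[K] MonoidAlgebra.single β 1)
          = (ml x u) ⊗ₜ[K] MonoidAlgebra.single (α * β) 1) ∧
      (∀ (u : V) (β : Ω) (x : L) (α : Ω),
        rb (u ⊗ₜ[K] MonoidAlgebra.single β 1) (x ⊗ₜ[K] MonoidAlgebra.single α 1)
          = (mr u x) ⊗ₜ[K] MonoidAlgebra.single (β * α) 1) ∧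
      (∀ (u : V) (α : Ω),
        qb (u ⊗ₜ[K] MonoidAlgebra.single α 1) = (q u) ⊗ₜ[K] MonoidAlgebra.single α 1) ∧
      (∀ (x : L) (α : Ω) (y : L) (β : Ω),
        Φb (x ⊗ₜ[K] MonoidAlgebra.single α 1) (y ⊗ₜ[K] MonoidAlgebra.single β 1)
          = (Φ x y) ⊗ₜ[K] MonoidAlgebra.single (α * β) 1) ∧
      (∀ (u : V) (α : Ω),
        Rb (u ⊗ₜ[K] MonoidAlgebra.single α 1) = (R α u) ⊗ₜ[K] MonoidAlgebra.single α 1) ∧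
      -- L ⊗ 𝕂Ω is a Hom-associative algebra
      (∀ X Y, pb (m X Y) = m (pb X) (pb Y)) ∧
      (∀ X Y Z, m (pb X) (m Y Z) = m (m X Y) (pb Z)) ∧
      -- V ⊗ 𝕂Ω is a bimodule over L ⊗ 𝕂Ω
      (∀ X U, qb (lb X U) = lb (pb X) (qb U)) ∧
      (∀ U X, qb (rb U X) = rb (qb U) (pb X)) ∧
      (∀ U X Y, rb (qb U) (m X Y) = rb (rb U X) (pb Y)) ∧
      (∀ X U Y, lb (pb X) (rb U Y) = rb (lb X U) (pb Y)) ∧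
      (∀ X Y U, lb (pb X) (lb Y U) = lb (m X Y) (qb U)) ∧
      -- Φ̄ is a 2-cocycle of L ⊗ 𝕂Ω with coefficients in V ⊗ 𝕂Ω
      (∀ X Y, qb (Φb X Y) = Φb (pb X) (pb Y)) ∧
      (∀ X Y Z, lb (pb X) (Φb Y Z) - rb (Φb X Y) (pb Z) - Φb (m X Y) (pb Z)
          + Φb (pb X) (m Y Z) = 0) ∧
      -- R̄ is a Φ̄-twisted Rota-Baxter operator
      (∀ U, Rb (qb U) = pb (Rb U)) ∧
      (∀ U W, m (Rb U) (Rb W)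
          = Rb (lb (Rb U) W + rb U (Rb W) + Φb (Rb U) (Rb W))) := by
    classical
  letI A := MonoidAlgebra K Ω
  let gm : A →ₗ[K] A →ₗ[K] A := LinearMap.mul K A
  have hgm : ∀ (α β : Ω), gm (MonoidAlgebra.single α (1:K)) (MonoidAlgebra.single β 1)
      = MonoidAlgebra.single (α * β) 1 := by
    intro α β
    show MonoidAlgebra.single α (1:K) * MonoidAlgebra.single β 1 = _
    rw [MonoidAlgebra.single_mul_single, one_mul]
  let m := tmap₂ mul gm
  let pb := TensorProduct.map p (LinearMap.id : A →ₗ[K] A)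
  let lb := tmap₂ ml gm
  let rb := tmap₂ mr gm
  let qb := TensorProduct.map q (LinearMap.id : A →ₗ[K] A)
  let Φb := tmap₂ Φ gm
  let Rb : (V ⊗[K] A) →ₗ[K] (L ⊗[K] A) :=
    (Finsupp.lsum K fun α : Ω =>
      ((TensorProduct.mk K L A).flip (MonoidAlgebra.single α 1)) ∘ₗ (R α)) ∘ₗ
      (TensorProduct.finsuppScalarRight K K V Ω).toLinearMap ∘ₗ
      TensorProduct.map LinearMap.id (MonoidAlgebra.coeffLinearEquiv K).toLinearMap
  -- generator formulas
  have hmg : ∀ (x y : L) (α β : Ω),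
      m (x ⊗ₜ[K] MonoidAlgebra.single α 1) (y ⊗ₜ[K] MonoidAlgebra.single β 1)
        = (mul x y) ⊗ₜ[K] MonoidAlgebra.single (α * β) 1 := by
    intro x y α β; rw [show m = tmap₂ mul gm from rfl, tmap₂_tmul, hgm]
  have hpg : ∀ (x : L) (α : Ω),
      pb (x ⊗ₜ[K] MonoidAlgebra.single α 1) = (p x) ⊗ₜ[K] MonoidAlgebra.single α 1 := by
    intro x α; simp [pb]
  have hlg : ∀ (x : L) (α : Ω) (u : V) (β : Ω),
      lb (x ⊗ₜ[K] MonoidAlgebra.single α 1) (u ⊗ₜ[K] MonoidAlgebra.single β 1)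
        = (ml x u) ⊗ₜ[K] MonoidAlgebra.single (α * β) 1 := by
    intro x α u β; rw [show lb = tmap₂ ml gm from rfl, tmap₂_tmul, hgm]
  have hrg : ∀ (u : V) (β : Ω) (x : L) (α : Ω),
      rb (u ⊗ₜ[K] MonoidAlgebra.single β 1) (x ⊗ₜ[K] MonoidAlgebra.single α 1)
        = (mr u x) ⊗ₜ[K] MonoidAlgebra.single (β * α) 1 := by
    intro u β x α; rw [show rb = tmap₂ mr gm from rfl, tmap₂_tmul, hgm]
  have hqg : ∀ (u : V) (α : Ω),
      qb (u ⊗ₜ[K] MonoidAlgebra.single α 1) = (q u) ⊗ₜ[K] MonoidAlgebra.single α 1 := by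
    intro u α; simp [qb]
  have hΦg : ∀ (x : L) (α : Ω) (y : L) (β : Ω),
      Φb (x ⊗ₜ[K] MonoidAlgebra.single α 1) (y ⊗ₜ[K] MonoidAlgebra.single β 1)
        = (Φ x y) ⊗ₜ[K] MonoidAlgebra.single (α * β) 1 := by
    intro x α y β; rw [show Φb = tmap₂ Φ gm from rfl, tmap₂_tmul, hgm]
  have hRg : ∀ (u : V) (α : Ω),
      Rb (u ⊗ₜ[K] MonoidAlgebra.single α 1) = (R α u) ⊗ₜ[K] MonoidAlgebra.single α 1 := by
    intro u α
    have h1 : (TensorProduct.finsuppScalarRight K K V Ω) (TensorProduct.map LinearMap.id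
        (MonoidAlgebra.coeffLinearEquiv K).toLinearMap (u ⊗ₜ[K] MonoidAlgebra.single α 1))
        = Finsupp.single α u := by
      rw [TensorProduct.map_tmul, TensorProduct.finsuppScalarRight_apply_tmul]; simp
    show (Finsupp.lsum K fun α : Ω =>
        ((TensorProduct.mk K L A).flip (MonoidAlgebra.single α 1)) ∘ₗ (R α))
        ((TensorProduct.finsuppScalarRight K K V Ω) (TensorProduct.map LinearMap.id
        (MonoidAlgebra.coeffLinearEquiv K).toLinearMap (u ⊗ₜ[K] MonoidAlgebra.single α 1))) = _
    rw [h1, Finsupp.lsum_single]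
    rfl
  -- the laws
  have law1 : ∀ X Y, pb (m X Y) = m (pb X) (pb Y) := by
    intro X Y
    induction X using tensor_single_induction with
    | h0 => simp
    | hadd X₁ X₂ h1 h2 => simp only [map_add, LinearMap.add_apply, h1, h2]
    | hs x α =>
      induction Y using tensor_single_induction with
      | h0 => simp
      | hadd Y₁ Y₂ h1 h2 => simp only [map_add, LinearMap.add_apply, h1, h2]
      | hs y β => simp [hmg, hpg, hpm]
  have law2 : ∀ X Y Z, m (pb X) (m Y Z) = m (m X Y) (pb Z) := by
    intro X Y Z
    induction X using tensor_single_induction with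
    | h0 => simp
    | hadd X₁ X₂ h1 h2 => simp only [map_add, LinearMap.add_apply, h1, h2]
    | hs x α =>
      induction Y using tensor_single_induction with
      | h0 => simp
      | hadd Y₁ Y₂ h1 h2 => simp only [map_add, LinearMap.add_apply, h1, h2]
      | hs y β =>
        induction Z using tensor_single_induction with
        | h0 => simp
        | hadd Z₁ Z₂ h1 h2 => simp only [map_add, LinearMap.add_apply, h1, h2]
        | hs z γ => simp [hmg, hpg, hassoc, mul_assoc]
  have law3 : ∀ X U, qb (lb X U) = lb (pb X) (qb U) := by
    intro X U
    induction X using tensor_single_induction with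
    | h0 => simp
    | hadd X₁ X₂ h1 h2 => simp only [map_add, LinearMap.add_apply, h1, h2]
    | hs x α =>
      induction U using tensor_single_induction with
      | h0 => simp
      | hadd U₁ U₂ h1 h2 => simp only [map_add, LinearMap.add_apply, h1, h2]
      | hs u β => simp [hlg, hpg, hqg, hql]
  have law4 : ∀ U X, qb (rb U X) = rb (qb U) (pb X) := by
    intro U X
    induction U using tensor_single_induction with
    | h0 => simp
    | hadd U₁ U₂ h1 h2 => simp only [map_add, LinearMap.add_apply, h1, h2]
    | hs u β =>
      induction X using tensor_single_induction with
      | h0 => simp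
      | hadd X₁ X₂ h1 h2 => simp only [map_add, LinearMap.add_apply, h1, h2]
      | hs x α => simp [hrg, hpg, hqg, hqr]
  have law5 : ∀ U X Y, rb (qb U) (m X Y) = rb (rb U X) (pb Y) := by
    intro U X Y
    induction U using tensor_single_induction with
    | h0 => simp
    | hadd U₁ U₂ h1 h2 => simp only [map_add, LinearMap.add_apply, h1, h2]
    | hs u δ =>
      induction X using tensor_single_induction with
      | h0 => simp
      | hadd X₁ X₂ h1 h2 => simp only [map_add, LinearMap.add_apply, h1, h2]
      | hs x α =>
        induction Y using tensor_single_induction with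
        | h0 => simp
        | hadd Y₁ Y₂ h1 h2 => simp only [map_add, LinearMap.add_apply, h1, h2]
        | hs y β => simp [hmg, hrg, hpg, hqg, hb1, mul_assoc]
  have law6 : ∀ X U Y, lb (pb X) (rb U Y) = rb (lb X U) (pb Y) := by
    intro X U Y
    induction X using tensor_single_induction with
    | h0 => simp
    | hadd X₁ X₂ h1 h2 => simp only [map_add, LinearMap.add_apply, h1, h2]
    | hs x α =>
      induction U using tensor_single_induction with
      | h0 => simp
      | hadd U₁ U₂ h1 h2 => simp only [map_add, LinearMap.add_apply, h1, h2]
      | hs u δ =>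
        induction Y using tensor_single_induction with
        | h0 => simp
        | hadd Y₁ Y₂ h1 h2 => simp only [map_add, LinearMap.add_apply, h1, h2]
        | hs y β => simp [hlg, hrg, hpg, hb2, mul_assoc]
  have law7 : ∀ X Y U, lb (pb X) (lb Y U) = lb (m X Y) (qb U) := by
    intro X Y U
    induction X using tensor_single_induction with
    | h0 => simp
    | hadd X₁ X₂ h1 h2 => simp only [map_add, LinearMap.add_apply, h1, h2]
    | hs x α =>
      induction Y using tensor_single_induction with
      | h0 => simp
      | hadd Y₁ Y₂ h1 h2 => simp only [map_add, LinearMap.add_apply, h1, h2]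
      | hs y β =>
        induction U using tensor_single_induction with
        | h0 => simp
        | hadd U₁ U₂ h1 h2 => simp only [map_add, LinearMap.add_apply, h1, h2]
        | hs u δ => simp [hmg, hlg, hpg, hqg, hb3, mul_assoc]
  have law8 : ∀ X Y, qb (Φb X Y) = Φb (pb X) (pb Y) := by
    intro X Y
    induction X using tensor_single_induction with
    | h0 => simp
    | hadd X₁ X₂ h1 h2 => simp only [map_add, LinearMap.add_apply, h1, h2]
    | hs x α =>
      induction Y using tensor_single_induction with
      | h0 => simp
      | hadd Y₁ Y₂ h1 h2 => simp only [map_add, LinearMap.add_apply, h1, h2]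
      | hs y β => simp [hΦg, hpg, hqg, hc1]
  have law9 : ∀ X Y Z, lb (pb X) (Φb Y Z) - rb (Φb X Y) (pb Z) - Φb (m X Y) (pb Z)
      + Φb (pb X) (m Y Z) = 0 := by
    intro X Y Z
    induction X using tensor_single_induction with
    | h0 => simp
    | hadd X₁ X₂ h1 h2 =>
      simp only [map_add, LinearMap.add_apply]
      have h := congrArg₂ (· + ·) h1 h2
      simp only [add_zero] at h
      rw [← h]; abel
    | hs x α =>
      induction Y using tensor_single_induction with
      | h0 => simp
      | hadd Y₁ Y₂ h1 h2 =>
        simp only [map_add, LinearMap.add_apply]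
        have h := congrArg₂ (· + ·) h1 h2
        simp only [add_zero] at h
        rw [← h]; abel
      | hs y β =>
        induction Z using tensor_single_induction with
        | h0 => simp
        | hadd Z₁ Z₂ h1 h2 =>
          simp only [map_add, LinearMap.add_apply]
          have h := congrArg₂ (· + ·) h1 h2
          simp only [add_zero] at h
          rw [← h]; abel
        | hs z γ =>
          simp only [hmg, hlg, hrg, hpg, hΦg, mul_assoc]
          rw [← TensorProduct.sub_tmul, ← TensorProduct.sub_tmul,
            ← TensorProduct.add_tmul, hc2, TensorProduct.zero_tmul]
  have law10 : ∀ U, Rb (qb U) = pb (Rb U) := by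
    intro U
    induction U using tensor_single_induction with
    | h0 => simp
    | hadd U₁ U₂ h1 h2 => simp only [map_add, h1, h2]
    | hs u α => simp [hqg, hRg, hpg, hRq]
  have law11 : ∀ U W, m (Rb U) (Rb W)
      = Rb (lb (Rb U) W + rb U (Rb W) + Φb (Rb U) (Rb W)) := by
    intro U W
    induction U using tensor_single_induction with
    | h0 => simp
    | hadd U₁ U₂ h1 h2 =>
      simp only [map_add, LinearMap.add_apply, h1, h2]
      abel
    | hs u α =>
      induction W using tensor_single_induction with
      | h0 => simp
      | hadd W₁ W₂ h1 h2 =>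
        simp only [map_add, LinearMap.add_apply, h1, h2]
        abel
      | hs w β =>
        rw [hRg, hRg, hmg, hR, hlg, hrg, hΦg,
          ← TensorProduct.add_tmul, ← TensorProduct.add_tmul, hRg]
  exact ⟨m, pb, lb, rb, qb, Φb, Rb, hmg, hpg, hlg, hrg, hqg, hΦg, hRg,
    law1, law2, law3, law4, law5, law6, law7, law8, law9, law10, law11⟩
end

section
/- Let (L,·,p) be a Hom-associative algebra over 𝕂, (V,·ₗ,·ᵣ,q) a bimodule over it, and Φ a 2-cocycle of L with coefficients in V. Then the direct sum L ⊕ V with multiplication (x,u)·_Φ(y,v) = (x·y, x·ₗv + u·ᵣy + Φ(x,y)) and structure map (p⊕q)(x,u) = (p(x), q(u)) is a Hom-associative algebra (the Φ-twisted semidirect product L ⋉_Φ V). Moreover, a collection {R_α: V → L}_{α∈Ω} of linear maps is a Φ-twisted Rota-Baxter family operator if and only if the collection of graphs {Gr(R_α) = {(R_α(u), u) : u ∈ V}}_{α∈Ω} is a Hom-family subalgebra of L ⋉_Φ V. -/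
/-- the `Φ`-twisted semidirect product `L ⋉_Φ V` is a Hom-associative
algebra, and a collection `{R_α : V → L}` is a `Φ`-twisted Rota-Baxter family
operator iff the collection of graphs `{Gr(R_α)}` is a Hom-family subalgebra of
`L ⋉_Φ V`. -/
theorem twisted_semidirect_product_and_graph_characterization
    {K : Type*} [Field K] [CharZero K] {Ω : Type*} [Semigroup Ω]
    {L : Type*} [AddCommGroup L] [Module K L]
    {V : Type*} [AddCommGroup V] [Module K V]
    (mul : L →ₗ[K] L →ₗ[K] L) (p : L →ₗ[K] L)
    (hpm : ∀ x y, p (mul x y) = mul (p x) (p y))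
    (hassoc : ∀ x y z, mul (p x) (mul y z) = mul (mul x y) (p z))
    (ml : L →ₗ[K] V →ₗ[K] V) (mr : V →ₗ[K] L →ₗ[K] V) (q : V →ₗ[K] V)
    (hql : ∀ x u, q (ml x u) = ml (p x) (q u))
    (hqr : ∀ u x, q (mr u x) = mr (q u) (p x))
    (hb1 : ∀ u x y, mr (q u) (mul x y) = mr (mr u x) (p y))
    (hb2 : ∀ x u y, ml (p x) (mr u y) = mr (ml x u) (p y))
    (hb3 : ∀ x y u, ml (p x) (ml y u) = ml (mul x y) (q u))
    (Φ : L →ₗ[K] L →ₗ[K] V)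
    (hc1 : ∀ x y, q (Φ x y) = Φ (p x) (p y))
    (hc2 : ∀ x y z, ml (p x) (Φ y z) - mr (Φ x y) (p z) - Φ (mul x y) (p z)
        + Φ (p x) (mul y z) = 0)
    (R : Ω → V →ₗ[K] L) :
    ∃ (mΦ : (L × V) →ₗ[K] (L × V) →ₗ[K] (L × V)) (P : (L × V) →ₗ[K] (L × V)),
      -- defining formulas of the semidirect product structure
      (∀ (x y : L) (u v : V),
        mΦ (x, u) (y, v) = (mul x y, ml x v + mr u y + Φ x y)) ∧
      (∀ (x : L) (u : V), P (x, u) = (p x, q u)) ∧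
      -- (1) L ⋉_Φ V is a Hom-associative algebra
      (∀ a b : L × V, P (mΦ a b) = mΦ (P a) (P b)) ∧
      (∀ a b c : L × V, mΦ (P a) (mΦ b c) = mΦ (mΦ a b) (P c)) ∧
      -- (2) the graph characterization
      (((∀ (α : Ω) (u : V), R α (q u) = p (R α u)) ∧
        (∀ (α β : Ω) (u v : V),
          mul (R α u) (R β v)
            = R (α * β) (ml (R α u) v + mr u (R β v) + Φ (R α u) (R β v))))
        ↔
        ((∀ (α : Ω) (a : L × V),
            a ∈ LinearMap.range ((R α).prod (LinearMap.id : V →ₗ[K] V)) →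
            P a ∈ LinearMap.range ((R α).prod (LinearMap.id : V →ₗ[K] V))) ∧
         (∀ (α β : Ω) (a b : L × V),
            a ∈ LinearMap.range ((R α).prod (LinearMap.id : V →ₗ[K] V)) →
            b ∈ LinearMap.range ((R β).prod (LinearMap.id : V →ₗ[K] V)) →
            mΦ a b ∈ LinearMap.range ((R (α * β)).prod (LinearMap.id : V →ₗ[K] V))))) := by
  refine ⟨LinearMap.mk₂ K
      (fun a b => (mul a.1 b.1, ml a.1 b.2 + mr a.2 b.1 + Φ a.1 b.1))
      (by intro a b c; simp [Prod.ext_iff]; abel)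
      (by intro c a b; simp [Prod.ext_iff, smul_add])
      (by intro a b c; simp [Prod.ext_iff]; abel)
      (by intro c a b; simp [Prod.ext_iff, smul_add]),
    p.prodMap q, fun x y u v => rfl, fun x u => rfl, ?_, ?_, ?_⟩
  · intro a b
    simp [Prod.ext_iff, hpm, hql, hqr, hc1]
  · intro a b c
    have h := hc2 a.1 b.1 c.1
    simp only [LinearMap.mk₂_apply, LinearMap.prodMap_apply, Prod.ext_iff]
    constructor
    · exact hassoc _ _ _
    · simp only [map_add, LinearMap.add_apply, hb1, hb2, hb3]
      rw [← sub_eq_zero, ← h]; abel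
  · have hmem : ∀ (α : Ω) (a : L × V),
        a ∈ LinearMap.range ((R α).prod (LinearMap.id : V →ₗ[K] V)) ↔
        a.1 = R α a.2 := by
      intro α a
      constructor
      · rintro ⟨u, rfl⟩; rfl
      · intro h
        exact ⟨a.2, by simp [LinearMap.prod_apply, ← h]⟩
    constructor
    · rintro ⟨h1, h2⟩
      constructor
      · intro α a ha
        rw [hmem] at ha ⊢
        simp [ha, ← h1]
      · intro α β a b ha hb
        rw [hmem] at ha hb ⊢
        simp only [LinearMap.mk₂_apply]
        rw [ha, hb]
        exact h2 α β a.2 b.2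
    · rintro ⟨h1, h2⟩
      constructor
      · intro α u
        have := h1 α (R α u, u) ((hmem _ _).2 rfl)
        rw [hmem] at this
        simpa using this.symm
      · intro α β u v
        have := h2 α β (R α u, u) (R β v, v) ((hmem _ _).2 rfl) ((hmem _ _).2 rfl)
        rw [hmem] at this
        simpa using this
end

section
/- Let (G, ≺, ≻, ⋎, p) be a Hom-NS-algebra over 𝕂. Then (G, ∗, p) is a Hom-associative algebra, where x ∗ y = x ≺ y + x ≻ y + x ⋎ y for all x,y ∈ G. -/
/-- A Hom-NS-algebra `(G, ≺, ≻, ⋎, p)` gives rise to a Hom-associative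
algebra `(G, ∗, p)` where `x ∗ y = x ≺ y + x ≻ y + x ⋎ y`. -/
theorem homNS_to_homAssociative
    {K : Type*} [Field K] [CharZero K]
    {G : Type*} [AddCommGroup G] [Module K G]
    (prec succ vee : G →ₗ[K] G →ₗ[K] G) (p : G →ₗ[K] G)
    (hp1 : ∀ x y, p (prec x y) = prec (p x) (p y))
    (hp2 : ∀ x y, p (succ x y) = succ (p x) (p y))
    (hp3 : ∀ x y, p (vee x y) = vee (p x) (p y))
    (h1 : ∀ x y z, prec (prec x y) (p z) = prec (p x) (prec y z + succ y z + vee y z))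
    (h2 : ∀ x y z, prec (succ x y) (p z) = succ (p x) (prec y z))
    (h3 : ∀ x y z, succ (prec x y + succ x y + vee x y) (p z) = succ (p x) (succ y z))
    (h4 : ∀ x y z, vee (prec x y + succ x y + vee x y) (p z) + prec (vee x y) (p z)
        = succ (p x) (vee y z) + vee (p x) (prec y z + succ y z + vee y z)) :
    let star : G → G → G := fun x y => prec x y + succ x y + vee x y
    (∀ x y, p (star x y) = star (p x) (p y)) ∧
    (∀ x y z, star (p x) (star y z) = star (star x y) (p z)) := by
  intro star
  constructor
  · intro x y
    simp only [star, map_add, hp1, hp2, hp3]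
  · intro x y z
    have e1 := h1 x y z
    have e2 := h2 x y z
    have e3 := h3 x y z
    have e4 := h4 x y z
    simp only [star, map_add, LinearMap.add_apply] at *
    linear_combination (norm := abel) -e1 - e2 - e3 - e4
end

section
/- Let (G, ≺, ≻, ⋎) be an NS-algebra over 𝕂 (i.e., a Hom-NS-algebra with structure map the identity) and let p: G → G be an NS-algebra morphism, i.e., a linear map with p(x≺y) = p(x)≺p(y), p(x≻y) = p(x)≻p(y), p(x⋎y) = p(x)⋎p(y). Define new operations x ≺ₚ y = p(x)≺p(y), x ≻ₚ y = p(x)≻p(y), x ⋎ₚ y = p(x)⋎p(y). Then (G, ≺ₚ, ≻ₚ, ⋎ₚ, p) is a Hom-NS-algebra (the Yau twist of (G, ≺, ≻, ⋎)). -/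
/-- the Yau twist of an NS-algebra along an NS-algebra morphism `p`
is a Hom-NS-algebra. -/
theorem yau_twist_NS_algebra
    {K : Type*} [Field K] [CharZero K]
    {G : Type*} [AddCommGroup G] [Module K G]
    (prec succ vee : G →ₗ[K] G →ₗ[K] G)
    -- NS-algebra axioms (Hom-NS with structure map the identity)
    (h1 : ∀ x y z, prec (prec x y) z = prec x (prec y z + succ y z + vee y z))
    (h2 : ∀ x y z, prec (succ x y) z = succ x (prec y z))
    (h3 : ∀ x y z, succ (prec x y + succ x y + vee x y) z = succ x (succ y z))
    (h4 : ∀ x y z, vee (prec x y + succ x y + vee x y) z + prec (vee x y) z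
        = succ x (vee y z) + vee x (prec y z + succ y z + vee y z))
    -- p is an NS-algebra morphism
    (p : G →ₗ[K] G)
    (hp1 : ∀ x y, p (prec x y) = prec (p x) (p y))
    (hp2 : ∀ x y, p (succ x y) = succ (p x) (p y))
    (hp3 : ∀ x y, p (vee x y) = vee (p x) (p y)) :
    let precP : G → G → G := fun x y => prec (p x) (p y)
    let succP : G → G → G := fun x y => succ (p x) (p y)
    let veeP : G → G → G := fun x y => vee (p x) (p y)
    (∀ x y, p (precP x y) = precP (p x) (p y)) ∧
    (∀ x y, p (succP x y) = succP (p x) (p y)) ∧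
    (∀ x y, p (veeP x y) = veeP (p x) (p y)) ∧
    (∀ x y z, precP (precP x y) (p z) = precP (p x) (precP y z + succP y z + veeP y z)) ∧
    (∀ x y z, precP (succP x y) (p z) = succP (p x) (precP y z)) ∧
    (∀ x y z, succP (precP x y + succP x y + veeP x y) (p z) = succP (p x) (succP y z)) ∧
    (∀ x y z, veeP (precP x y + succP x y + veeP x y) (p z) + precP (veeP x y) (p z)
        = succP (p x) (veeP y z) + veeP (p x) (precP y z + succP y z + veeP y z)) := by
  intro precP succP veeP
  refine ⟨fun x y => by simp [precP, hp1], fun x y => by simp [succP, hp2],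
    fun x y => by simp [veeP, hp3], ?_, ?_, ?_, ?_⟩
  · intro x y z
    simp only [precP, succP, veeP, hp1, hp2, hp3, map_add]
    have := h1 (p (p x)) (p (p y)) (p (p z))
    simp only [map_add, LinearMap.add_apply] at this
    exact this
  · intro x y z
    simp only [precP, succP, veeP, hp1, hp2, hp3, map_add]
    have := h2 (p (p x)) (p (p y)) (p (p z))
    exact this
  · intro x y z
    simp only [precP, succP, veeP, hp1, hp2, hp3, map_add]
    have := h3 (p (p x)) (p (p y)) (p (p z))
    simp only [map_add, LinearMap.add_apply] at this
    exact this
  · intro x y z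
    simp only [precP, succP, veeP, hp1, hp2, hp3, map_add]
    have := h4 (p (p x)) (p (p y)) (p (p z))
    simp only [map_add, LinearMap.add_apply] at this
    exact this
end

section
/- Let Ω be a semigroup and (G, {≺_α, ≻_α, ⋎_{α,β}}_{α,β∈Ω}) an NS-family algebra over 𝕂 (i.e., a Hom-NS-family algebra with structure map the identity), and let p: G → G be an NS-family algebra morphism, i.e., a linear map with p(x≺_α y) = p(x)≺_α p(y), p(x≻_α y) = p(x)≻_α p(y), p(x⋎_{α,β}y) = p(x)⋎_{α,β}p(y) for all α,β ∈ Ω. Define x ≺ᵖ_α y = p(x)≺_α p(y), x ≻ᵖ_α y = p(x)≻_α p(y), x ⋎ᵖ_{α,β} y = p(x)⋎_{α,β}p(y). Then (G, {≺ᵖ_α, ≻ᵖ_α, ⋎ᵖ_{α,β}}_{α,β∈Ω}, p) is a Hom-NS-family algebra (the Yau twist). -/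
/-- the Yau twist of an NS-family algebra along an NS-family algebra
morphism `p` is a Hom-NS-family algebra. -/
theorem yau_twist_NS_family_algebra
    {K : Type*} [Field K] [CharZero K] {Ω : Type*} [Semigroup Ω]
    {G : Type*} [AddCommGroup G] [Module K G]
    (prec succ : Ω → G →ₗ[K] G →ₗ[K] G) (vee : Ω → Ω → G →ₗ[K] G →ₗ[K] G)
    -- NS-family algebra axioms (Hom-NS-family with structure map the identity)
    (h1 : ∀ (α β : Ω) (x y z : G),
      prec (α * β) x (prec β y z + succ α y z + vee α β y z) = prec β (prec α x y) z)
    (h2 : ∀ (α β : Ω) (x y z : G), prec β (succ α x y) z = succ α x (prec β y z))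
    (h3 : ∀ (α β : Ω) (x y z : G),
      succ (α * β) (prec β x y + succ α x y + vee α β x y) z = succ α x (succ β y z))
    (h4 : ∀ (α β γ : Ω) (x y z : G),
      succ α x (vee β γ y z) + vee α (β * γ) x (prec γ y z + succ β y z + vee β γ y z)
        = prec γ (vee α β x y) z
          + vee (α * β) γ (prec β x y + succ α x y + vee α β x y) z)
    -- p is an NS-family algebra morphism
    (p : G →ₗ[K] G)
    (hp1 : ∀ (α : Ω) (x y : G), p (prec α x y) = prec α (p x) (p y))
    (hp2 : ∀ (α : Ω) (x y : G), p (succ α x y) = succ α (p x) (p y))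
    (hp3 : ∀ (α β : Ω) (x y : G), p (vee α β x y) = vee α β (p x) (p y)) :
    let precP : Ω → G → G → G := fun α x y => prec α (p x) (p y)
    let succP : Ω → G → G → G := fun α x y => succ α (p x) (p y)
    let veeP : Ω → Ω → G → G → G := fun α β x y => vee α β (p x) (p y)
    (∀ (α : Ω) (x y : G), p (precP α x y) = precP α (p x) (p y)) ∧
    (∀ (α : Ω) (x y : G), p (succP α x y) = succP α (p x) (p y)) ∧
    (∀ (α β : Ω) (x y : G), p (veeP α β x y) = veeP α β (p x) (p y)) ∧
    (∀ (α β : Ω) (x y z : G),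
      precP (α * β) (p x) (precP β y z + succP α y z + veeP α β y z)
        = precP β (precP α x y) (p z)) ∧
    (∀ (α β : Ω) (x y z : G),
      precP β (succP α x y) (p z) = succP α (p x) (precP β y z)) ∧
    (∀ (α β : Ω) (x y z : G),
      succP (α * β) (precP β x y + succP α x y + veeP α β x y) (p z)
        = succP α (p x) (succP β y z)) ∧
    (∀ (α β γ : Ω) (x y z : G),
      succP α (p x) (veeP β γ y z)
          + veeP α (β * γ) (p x) (precP γ y z + succP β y z + veeP β γ y z)
        = precP γ (veeP α β x y) (p z)
          + veeP (α * β) γ (precP β x y + succP α x y + veeP α β x y) (p z)) := by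
  intro precP succP veeP
  refine ⟨?_, ?_, ?_, ?_, ?_, ?_, ?_⟩ <;> intros <;>
    simp only [precP, succP, veeP, map_add p, hp1, hp2, hp3] <;>
    first
      | rfl
      | exact h1 _ _ _ _ _
      | exact h2 _ _ _ _ _
      | exact h3 _ _ _ _ _
      | exact h4 _ _ _ _ _ _
end

section
/- Let (G, {≺_α, ≻_α, ⋎_{α,β}}_{α,β∈Ω}, p) be a Hom-NS-family algebra over 𝕂. Then G ⊗ 𝕂Ω is a Hom-NS-algebra with operations (a⊗α) ≺ (b⊗β) = (a ≺_β b)⊗αβ, (a⊗α) ≻ (b⊗β) = (a ≻_α b)⊗αβ, (a⊗α) ⋎ (b⊗β) = (a ⋎_{α,β} b)⊗αβ and structure map p̄(a⊗α) = p(a)⊗α. Moreover, if f: G → G' is a morphism of Hom-NS-family algebras (f preserves all operations ≺_α, ≻_α, ⋎_{α,β} and f∘p = p'∘f), then f̄: G⊗𝕂Ω → G'⊗𝕂Ω, a⊗α ↦ f(a)⊗α, is a morphism of the induced Hom-NS-algebras. -/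
open scoped TensorProduct

set_option linter.unusedSectionVars false
set_option maxHeartbeats 2000000

section HomNSAux

variable {K : Type*} [Field K] {Ω : Type*} [Semigroup Ω]
  {G : Type*} [AddCommGroup G] [Module K G]
  {G' : Type*} [AddCommGroup G'] [Module K G']

/-- The bilinear operation on `Ω →₀ G` induced by a family of bilinear operations. -/
noncomputable def homNSB (F : Ω → Ω → G →ₗ[K] G →ₗ[K] G) :
    (Ω →₀ G) →ₗ[K] (Ω →₀ G) →ₗ[K] (Ω →₀ G) :=
  Finsupp.lsum K fun α =>
    ((Finsupp.lsum K : (Ω → G →ₗ[K] Ω →₀ G) ≃ₗ[K] ((Ω →₀ G) →ₗ[K] Ω →₀ G)).toLinearMap) ∘ₗ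
      LinearMap.pi fun β => (F α β).compr₂ (Finsupp.lsingle (α * β))

@[simp] lemma homNSB_single (F : Ω → Ω → G →ₗ[K] G →ₗ[K] G) (α β : Ω) (a b : G) :
    homNSB F (Finsupp.single α a) (Finsupp.single β b)
      = Finsupp.single (α * β) (F α β a b) := by
  simp [homNSB]

@[simp] lemma homNS_mapRange_single (q : G →ₗ[K] G') (α : Ω) (a : G) :
    Finsupp.mapRange.linearMap q (Finsupp.single α a) = Finsupp.single α (q a) := by
  simp

lemma homNSB_sum (prec succ : Ω → G →ₗ[K] G →ₗ[K] G) (vee : Ω → Ω → G →ₗ[K] G →ₗ[K] G)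
    (u v : Ω →₀ G) :
    homNSB (fun α β => prec β + succ α + vee α β) u v
      = homNSB (fun _ β => prec β) u v + homNSB (fun α _ => succ α) u v + homNSB vee u v := by
  induction u using Finsupp.induction_linear with
  | zero => simp
  | add u₁ u₂ h h' => simp only [map_add, LinearMap.add_apply, h, h']; abel
  | single α a =>
    induction v using Finsupp.induction_linear with
    | zero => simp
    | add v₁ v₂ h h' => simp only [map_add, h, h']; abel
    | single β b => simp [Finsupp.single_add]

lemma homNSB_map (F : Ω → Ω → G →ₗ[K] G →ₗ[K] G) (F' : Ω → Ω → G' →ₗ[K] G' →ₗ[K] G')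
    (q : G →ₗ[K] G') (hq : ∀ (α β : Ω) (x y : G), q (F α β x y) = F' α β (q x) (q y))
    (u v : Ω →₀ G) :
    Finsupp.mapRange.linearMap q (homNSB F u v)
      = homNSB F' (Finsupp.mapRange.linearMap q u) (Finsupp.mapRange.linearMap q v) := by
  induction u using Finsupp.induction_linear with
  | zero => simp
  | add u₁ u₂ h h' => simp only [map_add, LinearMap.add_apply, h, h']
  | single α a =>
    induction v using Finsupp.induction_linear with
    | zero => simp
    | add v₁ v₂ h h' => simp only [map_add, h, h']
    | single β b => simp [hq]

lemma homNS_map_comm (q : G →ₗ[K] G') (r : G →ₗ[K] G) (r' : G' →ₗ[K] G')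
    (hq : ∀ x : G, q (r x) = r' (q x)) (u : Ω →₀ G) :
    Finsupp.mapRange.linearMap q (Finsupp.mapRange.linearMap r u)
      = Finsupp.mapRange.linearMap r' (Finsupp.mapRange.linearMap q u) := by
  induction u using Finsupp.induction_linear with
  | zero => simp
  | add u₁ u₂ h h' => simp only [map_add, h, h']
  | single α a => simp [hq]

lemma homNS_A1 (prec succ : Ω → G →ₗ[K] G →ₗ[K] G) (vee : Ω → Ω → G →ₗ[K] G →ₗ[K] G)
    (p : G →ₗ[K] G)
    (h1 : ∀ (α β : Ω) (x y z : G),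
      prec (α * β) (p x) (prec β y z + succ α y z + vee α β y z)
        = prec β (prec α x y) (p z))
    (u v w : Ω →₀ G) :
    homNSB (fun _ β => prec β) (homNSB (fun _ β => prec β) u v)
        (Finsupp.mapRange.linearMap p w)
      = homNSB (fun _ β => prec β) (Finsupp.mapRange.linearMap p u)
          (homNSB (fun α β => prec β + succ α + vee α β) v w) := by
  induction u using Finsupp.induction_linear with
  | zero => simp
  | add u₁ u₂ h h' => simp only [map_add, LinearMap.add_apply, h, h']
  | single α a =>
    induction v using Finsupp.induction_linear with
    | zero => simp
    | add v₁ v₂ h h' => simp only [map_add, LinearMap.add_apply, h, h']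
    | single β b =>
      induction w using Finsupp.induction_linear with
      | zero => simp
      | add w₁ w₂ h h' => simp only [map_add, LinearMap.add_apply, h, h']
      | single γ c =>
        simp only [homNSB_single, homNS_mapRange_single, LinearMap.add_apply, mul_assoc]
        exact congrArg _ (h1 β γ a b c).symm

lemma homNS_A2 (prec succ : Ω → G →ₗ[K] G →ₗ[K] G) (p : G →ₗ[K] G)
    (h2 : ∀ (α β : Ω) (x y z : G),
      prec β (succ α x y) (p z) = succ α (p x) (prec β y z))
    (u v w : Ω →₀ G) :
    homNSB (fun _ β => prec β) (homNSB (fun α _ => succ α) u v)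
        (Finsupp.mapRange.linearMap p w)
      = homNSB (fun α _ => succ α) (Finsupp.mapRange.linearMap p u)
          (homNSB (fun _ β => prec β) v w) := by
  induction u using Finsupp.induction_linear with
  | zero => simp
  | add u₁ u₂ h h' => simp only [map_add, LinearMap.add_apply, h, h']
  | single α a =>
    induction v using Finsupp.induction_linear with
    | zero => simp
    | add v₁ v₂ h h' => simp only [map_add, LinearMap.add_apply, h, h']
    | single β b =>
      induction w using Finsupp.induction_linear with
      | zero => simp
      | add w₁ w₂ h h' => simp only [map_add, LinearMap.add_apply, h, h']
      | single γ c =>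
        simp only [homNSB_single, homNS_mapRange_single, mul_assoc]
        exact congrArg _ (h2 α γ a b c)

lemma homNS_A3 (prec succ : Ω → G →ₗ[K] G →ₗ[K] G) (vee : Ω → Ω → G →ₗ[K] G →ₗ[K] G)
    (p : G →ₗ[K] G)
    (h3 : ∀ (α β : Ω) (x y z : G),
      succ (α * β) (prec β x y + succ α x y + vee α β x y) (p z)
        = succ α (p x) (succ β y z))
    (u v w : Ω →₀ G) :
    homNSB (fun α _ => succ α)
        (homNSB (fun α β => prec β + succ α + vee α β) u v)
        (Finsupp.mapRange.linearMap p w)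
      = homNSB (fun α _ => succ α) (Finsupp.mapRange.linearMap p u)
          (homNSB (fun α _ => succ α) v w) := by
  induction u using Finsupp.induction_linear with
  | zero => simp
  | add u₁ u₂ h h' => simp only [map_add, LinearMap.add_apply, h, h']
  | single α a =>
    induction v using Finsupp.induction_linear with
    | zero => simp
    | add v₁ v₂ h h' => simp only [map_add, LinearMap.add_apply, h, h']
    | single β b =>
      induction w using Finsupp.induction_linear with
      | zero => simp
      | add w₁ w₂ h h' => simp only [map_add, LinearMap.add_apply, h, h']
      | single γ c =>
        simp only [homNSB_single, homNS_mapRange_single, LinearMap.add_apply, mul_assoc]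
        exact congrArg _ (h3 α β a b c)

lemma homNS_A4 (prec succ : Ω → G →ₗ[K] G →ₗ[K] G) (vee : Ω → Ω → G →ₗ[K] G →ₗ[K] G)
    (p : G →ₗ[K] G)
    (h4 : ∀ (α β γ : Ω) (x y z : G),
      succ α (p x) (vee β γ y z)
          + vee α (β * γ) (p x) (prec γ y z + succ β y z + vee β γ y z)
        = prec γ (vee α β x y) (p z)
          + vee (α * β) γ (prec β x y + succ α x y + vee α β x y) (p z))
    (u v w : Ω →₀ G) :
    homNSB vee (homNSB (fun α β => prec β + succ α + vee α β) u v)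
        (Finsupp.mapRange.linearMap p w)
      + homNSB (fun _ β => prec β) (homNSB vee u v) (Finsupp.mapRange.linearMap p w)
      = homNSB (fun α _ => succ α) (Finsupp.mapRange.linearMap p u) (homNSB vee v w)
        + homNSB vee (Finsupp.mapRange.linearMap p u)
            (homNSB (fun α β => prec β + succ α + vee α β) v w) := by
  induction u using Finsupp.induction_linear with
  | zero => simp
  | add u₁ u₂ h h' =>
    simp only [map_add, LinearMap.add_apply]
    rw [add_add_add_comm, h, h', add_add_add_comm]
  | single α a =>
    induction v using Finsupp.induction_linear with
    | zero => simp
    | add v₁ v₂ h h' =>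
      simp only [map_add, LinearMap.add_apply]
      rw [add_add_add_comm, h, h', add_add_add_comm]
    | single β b =>
      induction w using Finsupp.induction_linear with
      | zero => simp
      | add w₁ w₂ h h' =>
        simp only [map_add, LinearMap.add_apply]
        rw [add_add_add_comm, h, h', add_add_add_comm]
      | single γ c =>
        simp only [homNSB_single, homNS_mapRange_single, LinearMap.add_apply, mul_assoc]
        rw [← Finsupp.single_add, ← Finsupp.single_add]
        refine congrArg _ ?_
        rw [h4 α β γ a b c]
        exact add_comm _ _

/-- Conjugation of a bilinear map by a linear equivalence. -/
noncomputable def homNSconj2 {T H : Type*} [AddCommGroup T] [Module K T]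
    [AddCommGroup H] [Module K H] (e : T ≃ₗ[K] H) (Bm : H →ₗ[K] H →ₗ[K] H) :
    T →ₗ[K] T →ₗ[K] T :=
  ((Bm.comp e.toLinearMap).compl₂ e.toLinearMap).compr₂ e.symm.toLinearMap

@[simp] lemma homNSconj2_apply {T H : Type*} [AddCommGroup T] [Module K T]
    [AddCommGroup H] [Module K H] (e : T ≃ₗ[K] H) (Bm : H →ₗ[K] H →ₗ[K] H) (X Y : T) :
    homNSconj2 e Bm X Y = e.symm (Bm (e X) (e Y)) := rfl

/-- Conjugation of a linear map by linear equivalences. -/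
noncomputable def homNSconj1 {T H T' H' : Type*} [AddCommGroup T] [Module K T]
    [AddCommGroup H] [Module K H] [AddCommGroup T'] [Module K T']
    [AddCommGroup H'] [Module K H']
    (e : T ≃ₗ[K] H) (e' : T' ≃ₗ[K] H') (L : H →ₗ[K] H') : T →ₗ[K] T' :=
  e'.symm.toLinearMap ∘ₗ L ∘ₗ e.toLinearMap

@[simp] lemma homNSconj1_apply {T H T' H' : Type*} [AddCommGroup T] [Module K T]
    [AddCommGroup H] [Module K H] [AddCommGroup T'] [Module K T']
    [AddCommGroup H'] [Module K H']
    (e : T ≃ₗ[K] H) (e' : T' ≃ₗ[K] H') (L : H →ₗ[K] H') (X : T) :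
    homNSconj1 e e' L X = e'.symm (L (e X)) := rfl

/-- `𝕂Ω` is just `Ω →₀ 𝕂` as a `𝕂`-module. -/
noncomputable def homNSi (K Ω : Type*) [Field K] [Semigroup Ω] :
    MonoidAlgebra K Ω ≃ₗ[K] (Ω →₀ K) := MonoidAlgebra.coeffLinearEquiv K

/-- The equivalence `G ⊗ 𝕂Ω ≃ Ω →₀ G`. -/
noncomputable def homNSe (K Ω G : Type*) [Field K] [Semigroup Ω]
    [DecidableEq Ω] [AddCommGroup G] [Module K G] :
    (G ⊗[K] MonoidAlgebra K Ω) ≃ₗ[K] (Ω →₀ G) :=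
  (TensorProduct.congr (LinearEquiv.refl K G) (homNSi K Ω)).trans
    (TensorProduct.finsuppScalarRight K K G Ω)

@[simp] lemma homNSe_tmul_single [DecidableEq Ω] (a : G) (α : Ω) :
    homNSe K Ω G (a ⊗ₜ[K] MonoidAlgebra.single α 1) = Finsupp.single α a := by
  have h1 : (TensorProduct.congr (LinearEquiv.refl K G) (homNSi K Ω))
      (a ⊗ₜ[K] MonoidAlgebra.single α 1) = a ⊗ₜ[K] Finsupp.single α (1 : K) := by
    rw [TensorProduct.congr_tmul]; rfl
  rw [homNSe, LinearEquiv.trans_apply, h1,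
    TensorProduct.finsuppScalarRight_apply_tmul]
  rw [Finsupp.sum_single_index] <;> simp

@[simp] lemma homNSe_symm_single [DecidableEq Ω] (a : G) (α : Ω) :
    (homNSe K Ω G).symm (Finsupp.single α a) = a ⊗ₜ[K] MonoidAlgebra.single α 1 := by
  rw [homNSe, LinearEquiv.symm_trans_apply,
    TensorProduct.finsuppScalarRight_symm_apply_single]
  rw [show ((TensorProduct.congr (LinearEquiv.refl K G) (homNSi K Ω)).symm
      (a ⊗ₜ[K] Finsupp.single α (1 : K)))
      = (LinearEquiv.refl K G).symm a ⊗ₜ[K] (homNSi K Ω).symm (Finsupp.single α (1 : K))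
    from TensorProduct.congr_symm_tmul _ _ _ _]
  rfl

end HomNSAux

/-- a Hom-NS-family algebra `G` induces a Hom-NS-algebra structure on
`G ⊗ 𝕂Ω` via `(a⊗α) ≺ (b⊗β) = (a ≺_β b)⊗αβ`, `(a⊗α) ≻ (b⊗β) = (a ≻_α b)⊗αβ`,
`(a⊗α) ⋎ (b⊗β) = (a ⋎_{α,β} b)⊗αβ`, `p̄(a⊗α) = p(a)⊗α`; and a morphism
`f : G → G'` of Hom-NS-family algebras induces a morphism
`f̄ : G⊗𝕂Ω → G'⊗𝕂Ω`, `a⊗α ↦ f(a)⊗α`, of the induced Hom-NS-algebras. -/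
theorem homNS_family_to_homNS_on_tensor
    {K : Type*} [Field K] [CharZero K] {Ω : Type*} [Semigroup Ω]
    {G : Type*} [AddCommGroup G] [Module K G]
    {G' : Type*} [AddCommGroup G'] [Module K G']
    -- Hom-NS-family algebra G
    (prec succ : Ω → G →ₗ[K] G →ₗ[K] G) (vee : Ω → Ω → G →ₗ[K] G →ₗ[K] G)
    (p : G →ₗ[K] G)
    (hp1 : ∀ (α : Ω) (x y : G), p (prec α x y) = prec α (p x) (p y))
    (hp2 : ∀ (α : Ω) (x y : G), p (succ α x y) = succ α (p x) (p y))
    (hp3 : ∀ (α β : Ω) (x y : G), p (vee α β x y) = vee α β (p x) (p y))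
    (h1 : ∀ (α β : Ω) (x y z : G),
      prec (α * β) (p x) (prec β y z + succ α y z + vee α β y z)
        = prec β (prec α x y) (p z))
    (h2 : ∀ (α β : Ω) (x y z : G),
      prec β (succ α x y) (p z) = succ α (p x) (prec β y z))
    (h3 : ∀ (α β : Ω) (x y z : G),
      succ (α * β) (prec β x y + succ α x y + vee α β x y) (p z)
        = succ α (p x) (succ β y z))
    (h4 : ∀ (α β γ : Ω) (x y z : G),
      succ α (p x) (vee β γ y z)
          + vee α (β * γ) (p x) (prec γ y z + succ β y z + vee β γ y z)
        = prec γ (vee α β x y) (p z)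
          + vee (α * β) γ (prec β x y + succ α x y + vee α β x y) (p z))
    -- Hom-NS-family algebra G'
    (prec' succ' : Ω → G' →ₗ[K] G' →ₗ[K] G') (vee' : Ω → Ω → G' →ₗ[K] G' →ₗ[K] G')
    (p' : G' →ₗ[K] G')
    (hp1' : ∀ (α : Ω) (x y : G'), p' (prec' α x y) = prec' α (p' x) (p' y))
    (hp2' : ∀ (α : Ω) (x y : G'), p' (succ' α x y) = succ' α (p' x) (p' y))
    (hp3' : ∀ (α β : Ω) (x y : G'), p' (vee' α β x y) = vee' α β (p' x) (p' y))
    (h1' : ∀ (α β : Ω) (x y z : G'),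
      prec' (α * β) (p' x) (prec' β y z + succ' α y z + vee' α β y z)
        = prec' β (prec' α x y) (p' z))
    (h2' : ∀ (α β : Ω) (x y z : G'),
      prec' β (succ' α x y) (p' z) = succ' α (p' x) (prec' β y z))
    (h3' : ∀ (α β : Ω) (x y z : G'),
      succ' (α * β) (prec' β x y + succ' α x y + vee' α β x y) (p' z)
        = succ' α (p' x) (succ' β y z))
    (h4' : ∀ (α β γ : Ω) (x y z : G'),
      succ' α (p' x) (vee' β γ y z)
          + vee' α (β * γ) (p' x) (prec' γ y z + succ' β y z + vee' β γ y z)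
        = prec' γ (vee' α β x y) (p' z)
          + vee' (α * β) γ (prec' β x y + succ' α x y + vee' α β x y) (p' z))
    -- a morphism f of Hom-NS-family algebras
    (f : G →ₗ[K] G')
    (hf1 : ∀ (α : Ω) (x y : G), f (prec α x y) = prec' α (f x) (f y))
    (hf2 : ∀ (α : Ω) (x y : G), f (succ α x y) = succ' α (f x) (f y))
    (hf3 : ∀ (α β : Ω) (x y : G), f (vee α β x y) = vee' α β (f x) (f y))
    (hfp : ∀ x : G, f (p x) = p' (f x)) :
    ∃ (precT succT veeT : (G ⊗[K] MonoidAlgebra K Ω) →ₗ[K]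
          (G ⊗[K] MonoidAlgebra K Ω) →ₗ[K] (G ⊗[K] MonoidAlgebra K Ω))
      (pT : (G ⊗[K] MonoidAlgebra K Ω) →ₗ[K] (G ⊗[K] MonoidAlgebra K Ω))
      (precT' succT' veeT' : (G' ⊗[K] MonoidAlgebra K Ω) →ₗ[K]
          (G' ⊗[K] MonoidAlgebra K Ω) →ₗ[K] (G' ⊗[K] MonoidAlgebra K Ω))
      (pT' : (G' ⊗[K] MonoidAlgebra K Ω) →ₗ[K] (G' ⊗[K] MonoidAlgebra K Ω))
      (fT : (G ⊗[K] MonoidAlgebra K Ω) →ₗ[K] (G' ⊗[K] MonoidAlgebra K Ω)),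
      -- defining formulas on generators
      (∀ (a b : G) (α β : Ω),
        precT (a ⊗ₜ[K] MonoidAlgebra.single α 1) (b ⊗ₜ[K] MonoidAlgebra.single β 1)
          = (prec β a b) ⊗ₜ[K] MonoidAlgebra.single (α * β) 1) ∧
      (∀ (a b : G) (α β : Ω),
        succT (a ⊗ₜ[K] MonoidAlgebra.single α 1) (b ⊗ₜ[K] MonoidAlgebra.single β 1)
          = (succ α a b) ⊗ₜ[K] MonoidAlgebra.single (α * β) 1) ∧
      (∀ (a b : G) (α β : Ω),
        veeT (a ⊗ₜ[K] MonoidAlgebra.single α 1) (b ⊗ₜ[K] MonoidAlgebra.single β 1)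
          = (vee α β a b) ⊗ₜ[K] MonoidAlgebra.single (α * β) 1) ∧
      (∀ (a : G) (α : Ω),
        pT (a ⊗ₜ[K] MonoidAlgebra.single α 1) = (p a) ⊗ₜ[K] MonoidAlgebra.single α 1) ∧
      (∀ (a b : G') (α β : Ω),
        precT' (a ⊗ₜ[K] MonoidAlgebra.single α 1) (b ⊗ₜ[K] MonoidAlgebra.single β 1)
          = (prec' β a b) ⊗ₜ[K] MonoidAlgebra.single (α * β) 1) ∧
      (∀ (a b : G') (α β : Ω),
        succT' (a ⊗ₜ[K] MonoidAlgebra.single α 1) (b ⊗ₜ[K] MonoidAlgebra.single β 1)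
          = (succ' α a b) ⊗ₜ[K] MonoidAlgebra.single (α * β) 1) ∧
      (∀ (a b : G') (α β : Ω),
        veeT' (a ⊗ₜ[K] MonoidAlgebra.single α 1) (b ⊗ₜ[K] MonoidAlgebra.single β 1)
          = (vee' α β a b) ⊗ₜ[K] MonoidAlgebra.single (α * β) 1) ∧
      (∀ (a : G') (α : Ω),
        pT' (a ⊗ₜ[K] MonoidAlgebra.single α 1) = (p' a) ⊗ₜ[K] MonoidAlgebra.single α 1) ∧
      (∀ (a : G) (α : Ω),
        fT (a ⊗ₜ[K] MonoidAlgebra.single α 1) = (f a) ⊗ₜ[K] MonoidAlgebra.single α 1) ∧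
      -- (G ⊗ 𝕂Ω, ≺, ≻, ⋎, p̄) is a Hom-NS-algebra
      (∀ X Y, pT (precT X Y) = precT (pT X) (pT Y)) ∧
      (∀ X Y, pT (succT X Y) = succT (pT X) (pT Y)) ∧
      (∀ X Y, pT (veeT X Y) = veeT (pT X) (pT Y)) ∧
      (∀ X Y Z, precT (precT X Y) (pT Z)
          = precT (pT X) (precT Y Z + succT Y Z + veeT Y Z)) ∧
      (∀ X Y Z, precT (succT X Y) (pT Z) = succT (pT X) (precT Y Z)) ∧
      (∀ X Y Z, succT (precT X Y + succT X Y + veeT X Y) (pT Z)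
          = succT (pT X) (succT Y Z)) ∧
      (∀ X Y Z, veeT (precT X Y + succT X Y + veeT X Y) (pT Z)
            + precT (veeT X Y) (pT Z)
          = succT (pT X) (veeT Y Z)
            + veeT (pT X) (precT Y Z + succT Y Z + veeT Y Z)) ∧
      -- f̄ is a morphism of the induced Hom-NS-algebras
      (∀ X Y, fT (precT X Y) = precT' (fT X) (fT Y)) ∧
      (∀ X Y, fT (succT X Y) = succT' (fT X) (fT Y)) ∧
      (∀ X Y, fT (veeT X Y) = veeT' (fT X) (fT Y)) ∧
      (∀ X, fT (pT X) = pT' (fT X)) := by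
  haveI := Classical.decEq Ω
  refine ⟨homNSconj2 (homNSe K Ω G) (homNSB (fun _ β => prec β)),
    homNSconj2 (homNSe K Ω G) (homNSB (fun α _ => succ α)),
    homNSconj2 (homNSe K Ω G) (homNSB vee),
    homNSconj1 (homNSe K Ω G) (homNSe K Ω G) (Finsupp.mapRange.linearMap p),
    homNSconj2 (homNSe K Ω G') (homNSB (fun _ β => prec' β)),
    homNSconj2 (homNSe K Ω G') (homNSB (fun α _ => succ' α)),
    homNSconj2 (homNSe K Ω G') (homNSB vee'),
    homNSconj1 (homNSe K Ω G') (homNSe K Ω G') (Finsupp.mapRange.linearMap p'),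
    homNSconj1 (homNSe K Ω G) (homNSe K Ω G') (Finsupp.mapRange.linearMap f),
    ?_, ?_, ?_, ?_, ?_, ?_, ?_, ?_, ?_, ?_, ?_, ?_, ?_, ?_, ?_, ?_, ?_, ?_, ?_, ?_⟩
  · intro a b α β
    rw [homNSconj2_apply, homNSe_tmul_single, homNSe_tmul_single, homNSB_single,
      homNSe_symm_single]
  · intro a b α β
    rw [homNSconj2_apply, homNSe_tmul_single, homNSe_tmul_single, homNSB_single,
      homNSe_symm_single]
  · intro a b α β
    rw [homNSconj2_apply, homNSe_tmul_single, homNSe_tmul_single, homNSB_single,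
      homNSe_symm_single]
  · intro a α
    rw [homNSconj1_apply, homNSe_tmul_single, homNS_mapRange_single, homNSe_symm_single]
  · intro a b α β
    rw [homNSconj2_apply, homNSe_tmul_single, homNSe_tmul_single, homNSB_single,
      homNSe_symm_single]
  · intro a b α β
    rw [homNSconj2_apply, homNSe_tmul_single, homNSe_tmul_single, homNSB_single,
      homNSe_symm_single]
  · intro a b α β
    rw [homNSconj2_apply, homNSe_tmul_single, homNSe_tmul_single, homNSB_single,
      homNSe_symm_single]
  · intro a α
    rw [homNSconj1_apply, homNSe_tmul_single, homNS_mapRange_single, homNSe_symm_single]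
  · intro a α
    rw [homNSconj1_apply, homNSe_tmul_single, homNS_mapRange_single, homNSe_symm_single]
  · intro X Y
    have h := congrArg (homNSe K Ω G).symm
      (homNSB_map (fun _ β => prec β) (fun _ β => prec β) p
        (fun α β x y => hp1 β x y) (homNSe K Ω G X) (homNSe K Ω G Y))
    simp only [homNSconj2_apply, homNSconj1_apply, LinearEquiv.apply_symm_apply]
    exact h
  · intro X Y
    have h := congrArg (homNSe K Ω G).symm
      (homNSB_map (fun α _ => succ α) (fun α _ => succ α) p
        (fun α β x y => hp2 α x y) (homNSe K Ω G X) (homNSe K Ω G Y))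
    simp only [homNSconj2_apply, homNSconj1_apply, LinearEquiv.apply_symm_apply]
    exact h
  · intro X Y
    have h := congrArg (homNSe K Ω G).symm
      (homNSB_map vee vee p (fun α β x y => hp3 α β x y)
        (homNSe K Ω G X) (homNSe K Ω G Y))
    simp only [homNSconj2_apply, homNSconj1_apply, LinearEquiv.apply_symm_apply]
    exact h
  · intro X Y Z
    have hsum : homNSconj2 (homNSe K Ω G) (homNSB fun _ β => prec β) Y Z
        + homNSconj2 (homNSe K Ω G) (homNSB fun α _ => succ α) Y Z
        + homNSconj2 (homNSe K Ω G) (homNSB vee) Y Z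
        = (homNSe K Ω G).symm (homNSB (fun α β => prec β + succ α + vee α β)
            (homNSe K Ω G Y) (homNSe K Ω G Z)) := by
      rw [homNSB_sum, map_add, map_add]
      rfl
    rw [hsum]
    simp only [homNSconj2_apply, homNSconj1_apply, LinearEquiv.apply_symm_apply]
    exact congrArg _ (homNS_A1 prec succ vee p h1 _ _ _)
  · intro X Y Z
    have h := congrArg (homNSe K Ω G).symm
      (homNS_A2 prec succ p h2 (homNSe K Ω G X) (homNSe K Ω G Y) (homNSe K Ω G Z))
    simp only [homNSconj2_apply, homNSconj1_apply, LinearEquiv.apply_symm_apply]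
    exact h
  · intro X Y Z
    have hsum : homNSconj2 (homNSe K Ω G) (homNSB fun _ β => prec β) X Y
        + homNSconj2 (homNSe K Ω G) (homNSB fun α _ => succ α) X Y
        + homNSconj2 (homNSe K Ω G) (homNSB vee) X Y
        = (homNSe K Ω G).symm (homNSB (fun α β => prec β + succ α + vee α β)
            (homNSe K Ω G X) (homNSe K Ω G Y)) := by
      rw [homNSB_sum, map_add, map_add]
      rfl
    rw [hsum]
    simp only [homNSconj2_apply, homNSconj1_apply, LinearEquiv.apply_symm_apply]
    exact congrArg _ (homNS_A3 prec succ vee p h3 _ _ _)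
  · intro X Y Z
    have hsumXY : homNSconj2 (homNSe K Ω G) (homNSB fun _ β => prec β) X Y
        + homNSconj2 (homNSe K Ω G) (homNSB fun α _ => succ α) X Y
        + homNSconj2 (homNSe K Ω G) (homNSB vee) X Y
        = (homNSe K Ω G).symm (homNSB (fun α β => prec β + succ α + vee α β)
            (homNSe K Ω G X) (homNSe K Ω G Y)) := by
      rw [homNSB_sum, map_add, map_add]
      rfl
    have hsumYZ : homNSconj2 (homNSe K Ω G) (homNSB fun _ β => prec β) Y Z
        + homNSconj2 (homNSe K Ω G) (homNSB fun α _ => succ α) Y Z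
        + homNSconj2 (homNSe K Ω G) (homNSB vee) Y Z
        = (homNSe K Ω G).symm (homNSB (fun α β => prec β + succ α + vee α β)
            (homNSe K Ω G Y) (homNSe K Ω G Z)) := by
      rw [homNSB_sum, map_add, map_add]
      rfl
    rw [hsumXY, hsumYZ]
    simp only [homNSconj2_apply, homNSconj1_apply, LinearEquiv.apply_symm_apply]
    rw [← map_add, ← map_add]
    exact congrArg _ (homNS_A4 prec succ vee p h4 _ _ _)
  · intro X Y
    have h := congrArg (homNSe K Ω G').symm
      (homNSB_map (fun _ β => prec β) (fun _ β => prec' β) f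
        (fun α β x y => hf1 β x y) (homNSe K Ω G X) (homNSe K Ω G Y))
    simp only [homNSconj2_apply, homNSconj1_apply, LinearEquiv.apply_symm_apply]
    exact h
  · intro X Y
    have h := congrArg (homNSe K Ω G').symm
      (homNSB_map (fun α _ => succ α) (fun α _ => succ' α) f
        (fun α β x y => hf2 α x y) (homNSe K Ω G X) (homNSe K Ω G Y))
    simp only [homNSconj2_apply, homNSconj1_apply, LinearEquiv.apply_symm_apply]
    exact h
  · intro X Y
    have h := congrArg (homNSe K Ω G').symm
      (homNSB_map vee vee' f (fun α β x y => hf3 α β x y)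
        (homNSe K Ω G X) (homNSe K Ω G Y))
    simp only [homNSconj2_apply, homNSconj1_apply, LinearEquiv.apply_symm_apply]
    exact h
  · intro X
    have h := congrArg (homNSe K Ω G').symm
      (homNS_map_comm f p p' hfp (homNSe K Ω G X))
    simp only [homNSconj1_apply, LinearEquiv.apply_symm_apply]
    exact h
end

section
/- Let (L,·,p) be a Hom-associative algebra over 𝕂 and {T_α: L → L}_{α∈Ω} a Rota-Baxter family operator of weight λ ∈ 𝕂. Define x ≺_α y = x·T_α(y), x ≻_α y = T_α(x)·y, and x ⊙ y = λ(x·y). Then (L, {≺_α, ≻_α}_{α∈Ω}, ⊙, p) is a Hom-tridendriform family algebra. -/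
/-- a Rota-Baxter family operator of weight `λ` on a Hom-associative
algebra induces a Hom-tridendriform family algebra. -/
theorem rotaBaxter_family_to_homTridendriform_family
    {K : Type*} [Field K] [CharZero K] {Ω : Type*} [Semigroup Ω]
    {L : Type*} [AddCommGroup L] [Module K L]
    (mul : L →ₗ[K] L →ₗ[K] L) (p : L →ₗ[K] L)
    (hpm : ∀ x y, p (mul x y) = mul (p x) (p y))
    (hassoc : ∀ x y z, mul (p x) (mul y z) = mul (mul x y) (p z))
    (lam : K) (T : Ω → L →ₗ[K] L)
    (hTp : ∀ (α : Ω) (x : L), p (T α x) = T α (p x))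
    (hT : ∀ (α β : Ω) (x y : L),
      mul (T α x) (T β y) = T (α * β) (mul (T α x) y + mul x (T β y) + lam • mul x y)) :
    let prec : Ω → L → L → L := fun α x y => mul x (T α y)
    let succ : Ω → L → L → L := fun α x y => mul (T α x) y
    let odot : L → L → L := fun x y => lam • mul x y
    (∀ (α : Ω) (x y : L), p (prec α x y) = prec α (p x) (p y)) ∧
    (∀ (α : Ω) (x y : L), p (succ α x y) = succ α (p x) (p y)) ∧
    (∀ x y : L, p (odot x y) = odot (p x) (p y)) ∧
    (∀ (α β : Ω) (x y z : L),
      prec (α * β) (p x) (prec β y z + succ α y z + odot y z) = prec β (prec α x y) (p z)) ∧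
    (∀ (α β : Ω) (x y z : L),
      prec β (succ α x y) (p z) = succ α (p x) (prec β y z)) ∧
    (∀ (α β : Ω) (x y z : L),
      succ (α * β) (prec β x y + succ α x y + odot x y) (p z) = succ α (p x) (succ β y z)) ∧
    (∀ (α : Ω) (x y z : L), odot (succ α x y) (p z) = succ α (p x) (odot y z)) ∧
    (∀ (α : Ω) (x y z : L), odot (prec α x y) (p z) = odot (p x) (succ α y z)) ∧
    (∀ (α : Ω) (x y z : L), prec α (odot x y) (p z) = odot (p x) (prec α y z)) ∧
    (∀ x y z : L, odot (odot x y) (p z) = odot (p x) (odot y z)) := by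
  intro prec succ odot
  refine ⟨fun α x y => ?_, fun α x y => ?_, fun x y => ?_, fun α β x y z => ?_,
    fun α β x y z => ?_, fun α β x y z => ?_, fun α x y z => ?_, fun α x y z => ?_,
    fun α x y z => ?_, fun x y z => ?_⟩
  · simp only [prec, hpm, hTp]
  · simp only [succ, hpm, hTp]
  · simp only [odot, map_smul, hpm]
  · -- prec (αβ) (p x) (...) = prec β (prec α x y) (p z)
    show mul (p x) (T (α * β) _) = mul (mul x (T α y)) (T β (p z))
    rw [← hTp, ← hassoc, hT]
    congr 2
    abel
  · show mul (mul (T α x) y) (T β (p z)) = mul (T α (p x)) (mul y (T β z))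
    rw [← hTp, ← hTp, ← hassoc]
  · show mul (T (α * β) _) (p z) = mul (T α (p x)) (mul (T β y) z)
    rw [← hTp, hassoc, hT]
    congr 2
    simp only [prec, succ, odot]
    abel
  · show lam • mul (mul (T α x) y) (p z) = mul (T α (p x)) (lam • mul y z)
    rw [map_smul, ← hTp, hassoc]
  · show lam • mul (mul x (T α y)) (p z) = lam • mul (p x) (mul (T α y) z)
    rw [hassoc]
  · show mul (lam • mul x y) (T α (p z)) = lam • mul (p x) (mul y (T α z))
    rw [← hTp, LinearMap.map_smul₂, hassoc]
  · show lam • mul (lam • mul x y) (p z) = lam • mul (p x) (lam • mul y z)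
    simp only [map_smul, LinearMap.map_smul₂, LinearMap.smul_apply, hassoc]
end

section
/- Let (L,·,p) be a Hom-associative algebra over 𝕂 and {T_α: L → L}_{α∈Ω} a Rota-Baxter family operator of weight λ ∈ 𝕂. Define x ≺_α y = x·T_α(y), x ≻_α y = T_α(x)·y, and x ⋎_{α,β} y = λ(x·y) for all α,β ∈ Ω. Then (L, {≺_α, ≻_α, ⋎_{α,β}}_{α,β∈Ω}, p) is a Hom-NS-family algebra. -/
/-- a Rota-Baxter family operator of weight `λ` on a Hom-associative
algebra induces a Hom-NS-family algebra with `x ≺_α y = x·T_α(y)`,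
`x ≻_α y = T_α(x)·y` and `x ⋎_{α,β} y = λ(x·y)`. -/
theorem rotaBaxter_family_to_homNS_family
    {K : Type*} [Field K] [CharZero K] {Ω : Type*} [Semigroup Ω]
    {L : Type*} [AddCommGroup L] [Module K L]
    (mul : L →ₗ[K] L →ₗ[K] L) (p : L →ₗ[K] L)
    (hpm : ∀ x y, p (mul x y) = mul (p x) (p y))
    (hassoc : ∀ x y z, mul (p x) (mul y z) = mul (mul x y) (p z))
    (lam : K) (T : Ω → L →ₗ[K] L)
    (hTp : ∀ (α : Ω) (x : L), p (T α x) = T α (p x))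
    (hT : ∀ (α β : Ω) (x y : L),
      mul (T α x) (T β y) = T (α * β) (mul (T α x) y + mul x (T β y) + lam • mul x y)) :
    let prec : Ω → L → L → L := fun α x y => mul x (T α y)
    let succ : Ω → L → L → L := fun α x y => mul (T α x) y
    let vee : Ω → Ω → L → L → L := fun _ _ x y => lam • mul x y
    (∀ (α : Ω) (x y : L), p (prec α x y) = prec α (p x) (p y)) ∧
    (∀ (α : Ω) (x y : L), p (succ α x y) = succ α (p x) (p y)) ∧
    (∀ (α β : Ω) (x y : L), p (vee α β x y) = vee α β (p x) (p y)) ∧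
    (∀ (α β : Ω) (x y z : L),
      prec (α * β) (p x) (prec β y z + succ α y z + vee α β y z)
        = prec β (prec α x y) (p z)) ∧
    (∀ (α β : Ω) (x y z : L),
      prec β (succ α x y) (p z) = succ α (p x) (prec β y z)) ∧
    (∀ (α β : Ω) (x y z : L),
      succ (α * β) (prec β x y + succ α x y + vee α β x y) (p z)
        = succ α (p x) (succ β y z)) ∧
    (∀ (α β γ : Ω) (x y z : L),
      succ α (p x) (vee β γ y z)
          + vee α (β * γ) (p x) (prec γ y z + succ β y z + vee β γ y z)
        = prec γ (vee α β x y) (p z)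
          + vee (α * β) γ (prec β x y + succ α x y + vee α β x y) (p z)) := by
  intro prec succ vee
  refine ⟨?_, ?_, ?_, ?_, ?_, ?_, ?_⟩
  · intro α x y
    simp only [prec, hpm, hTp]
  · intro α x y
    simp only [succ, hpm, hTp]
  · intro α β x y
    simp only [vee, map_smul, hpm]
  · intro α β x y z
    simp only [prec, succ, vee]
    rw [show mul y (T β z) + mul (T α y) z + lam • mul y z
        = mul (T α y) z + mul y (T β z) + lam • mul y z by abel,
      ← hT, hassoc, hTp]
  · intro α β x y z
    simp only [prec, succ, vee]
    rw [← hTp, ← hassoc, hTp]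
  · intro α β x y z
    simp only [prec, succ, vee]
    rw [show mul x (T β y) + mul (T α x) y + lam • mul x y
        = mul (T α x) y + mul x (T β y) + lam • mul x y by abel,
      ← hT, ← hTp, hassoc]
  · intro α β γ x y z
    simp only [prec, succ, vee, map_add, map_smul, LinearMap.add_apply,
      LinearMap.smul_apply, smul_add]
    rw [← hTp α, hassoc, hassoc x y (T γ z), hTp γ z, hassoc x (T β y), hassoc x y z]
    abel
end

section
/- Let (L,·,p) be a Hom-associative algebra over 𝕂, (V,·ₗ,·ᵣ,q) a bimodule over it, Φ a 2-cocycle of L with coefficients in V, and {R_α: V → L}_{α∈Ω} a Φ-twisted Rota-Baxter family operator. Define operations on V by u ≺_α v = u ·ᵣ R_α(v), u ≻_α v = R_α(u) ·ₗ v, and u ⋎_{α,β} v = Φ(R_α(u), R_β(v)). Then (V, {≺_α, ≻_α, ⋎_{α,β}}_{α,β∈Ω}, q) is a Hom-NS-family algebra. -/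
/-- a `Φ`-twisted Rota-Baxter family operator induces a Hom-NS-family
algebra structure on `V`. -/
theorem twisted_rotaBaxter_family_to_homNS_family
    {K : Type*} [Field K] [CharZero K] {Ω : Type*} [Semigroup Ω]
    {L : Type*} [AddCommGroup L] [Module K L]
    {V : Type*} [AddCommGroup V] [Module K V]
    -- Hom-associative algebra (L, ·, p)
    (mul : L →ₗ[K] L →ₗ[K] L) (p : L →ₗ[K] L)
    (hpm : ∀ x y, p (mul x y) = mul (p x) (p y))
    (hassoc : ∀ x y z, mul (p x) (mul y z) = mul (mul x y) (p z))
    -- bimodule (V, ·ₗ, ·ᵣ, q)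
    (ml : L →ₗ[K] V →ₗ[K] V) (mr : V →ₗ[K] L →ₗ[K] V) (q : V →ₗ[K] V)
    (hql : ∀ x u, q (ml x u) = ml (p x) (q u))
    (hqr : ∀ u x, q (mr u x) = mr (q u) (p x))
    (hb1 : ∀ u x y, mr (q u) (mul x y) = mr (mr u x) (p y))
    (hb2 : ∀ x u y, ml (p x) (mr u y) = mr (ml x u) (p y))
    (hb3 : ∀ x y u, ml (p x) (ml y u) = ml (mul x y) (q u))
    -- 2-cocycle Φ
    (Φ : L →ₗ[K] L →ₗ[K] V)
    (hc1 : ∀ x y, q (Φ x y) = Φ (p x) (p y))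
    (hc2 : ∀ x y z, ml (p x) (Φ y z) - mr (Φ x y) (p z) - Φ (mul x y) (p z)
        + Φ (p x) (mul y z) = 0)
    -- Φ-twisted Rota-Baxter family operator
    (R : Ω → V →ₗ[K] L)
    (hRq : ∀ (α : Ω) (u : V), R α (q u) = p (R α u))
    (hR : ∀ (α β : Ω) (u v : V),
      mul (R α u) (R β v)
        = R (α * β) (ml (R α u) v + mr u (R β v) + Φ (R α u) (R β v))) :
    let prec : Ω → V → V → V := fun α u v => mr u (R α v)
    let succ : Ω → V → V → V := fun α u v => ml (R α u) v
    let vee : Ω → Ω → V → V → V := fun α β u v => Φ (R α u) (R β v)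
    (∀ (α : Ω) (u v : V), q (prec α u v) = prec α (q u) (q v)) ∧
    (∀ (α : Ω) (u v : V), q (succ α u v) = succ α (q u) (q v)) ∧
    (∀ (α β : Ω) (u v : V), q (vee α β u v) = vee α β (q u) (q v)) ∧
    (∀ (α β : Ω) (u v w : V),
      prec (α * β) (q u) (prec β v w + succ α v w + vee α β v w)
        = prec β (prec α u v) (q w)) ∧
    (∀ (α β : Ω) (u v w : V),
      prec β (succ α u v) (q w) = succ α (q u) (prec β v w)) ∧
    (∀ (α β : Ω) (u v w : V),
      succ (α * β) (prec β u v + succ α u v + vee α β u v) (q w)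
        = succ α (q u) (succ β v w)) ∧
    (∀ (α β γ : Ω) (u v w : V),
      succ α (q u) (vee β γ v w)
          + vee α (β * γ) (q u) (prec γ v w + succ β v w + vee β γ v w)
        = prec γ (vee α β u v) (q w)
          + vee (α * β) γ (prec β u v + succ α u v + vee α β u v) (q w)) := by
  intro prec succ vee
  have key : ∀ (α β : Ω) (u v : V),
      R (α * β) (mr u (R β v) + ml (R α u) v + Φ (R α u) (R β v))
        = mul (R α u) (R β v) := by
    intro α β u v
    rw [show mr u (R β v) + ml (R α u) v + Φ (R α u) (R β v)
        = ml (R α u) v + mr u (R β v) + Φ (R α u) (R β v) from by abel, ← hR]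
  refine ⟨?_, ?_, ?_, ?_, ?_, ?_, ?_⟩
  · intro α u v; simp only [prec, hqr, hRq]
  · intro α u v; simp only [succ, hql, hRq]
  · intro α β u v; simp only [vee, hc1, hRq]
  · intro α β u v w
    simp only [prec, succ, vee]
    rw [key, hb1, hRq]
  · intro α β u v w
    simp only [prec, succ, hRq]
    exact (hb2 _ _ _).symm
  · intro α β u v w
    simp only [prec, succ, vee]
    rw [key, hRq, ← hb3]
  · intro α β γ u v w
    simp only [prec, succ, vee]
    rw [key, key]
    simp only [hRq]
    have h := hc2 (R α u) (R β v) (R γ w)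
    rw [← sub_eq_zero, ← h]
    abel
end

section
/- Let (L,·,p) be a Hom-associative algebra over 𝕂, (V,·ₗ,·ᵣ,q) a bimodule over it, Φ a 2-cocycle of L with coefficients in V, and R: V → L a Φ-twisted Rota-Baxter operator, i.e., a single linear map with R∘q = p∘R and R(u)·R(v) = R(R(u)·ₗv + u·ᵣR(v) + Φ(R(u),R(v))) for all u,v ∈ V. Define u ≺ v = u·ᵣR(v), u ≻ v = R(u)·ₗv, u ⋎ v = Φ(R(u), R(v)). Then (V, ≺, ≻, ⋎, q) is a Hom-NS-algebra. -/
/-- a `Φ`-twisted Rota-Baxter operator induces a Hom-NS-algebra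
structure on `V`. -/
theorem twisted_rotaBaxter_to_homNS
    {K : Type*} [Field K] [CharZero K]
    {L : Type*} [AddCommGroup L] [Module K L]
    {V : Type*} [AddCommGroup V] [Module K V]
    -- Hom-associative algebra (L, ·, p)
    (mul : L →ₗ[K] L →ₗ[K] L) (p : L →ₗ[K] L)
    (hpm : ∀ x y, p (mul x y) = mul (p x) (p y))
    (hassoc : ∀ x y z, mul (p x) (mul y z) = mul (mul x y) (p z))
    -- bimodule (V, ·ₗ, ·ᵣ, q)
    (ml : L →ₗ[K] V →ₗ[K] V) (mr : V →ₗ[K] L →ₗ[K] V) (q : V →ₗ[K] V)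
    (hql : ∀ x u, q (ml x u) = ml (p x) (q u))
    (hqr : ∀ u x, q (mr u x) = mr (q u) (p x))
    (hb1 : ∀ u x y, mr (q u) (mul x y) = mr (mr u x) (p y))
    (hb2 : ∀ x u y, ml (p x) (mr u y) = mr (ml x u) (p y))
    (hb3 : ∀ x y u, ml (p x) (ml y u) = ml (mul x y) (q u))
    -- 2-cocycle Φ
    (Φ : L →ₗ[K] L →ₗ[K] V)
    (hc1 : ∀ x y, q (Φ x y) = Φ (p x) (p y))
    (hc2 : ∀ x y z, ml (p x) (Φ y z) - mr (Φ x y) (p z) - Φ (mul x y) (p z)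
        + Φ (p x) (mul y z) = 0)
    -- Φ-twisted Rota-Baxter operator
    (R : V →ₗ[K] L)
    (hRq : ∀ u, R (q u) = p (R u))
    (hR : ∀ u v, mul (R u) (R v) = R (ml (R u) v + mr u (R v) + Φ (R u) (R v))) :
    let prec : V → V → V := fun u v => mr u (R v)
    let succ : V → V → V := fun u v => ml (R u) v
    let vee : V → V → V := fun u v => Φ (R u) (R v)
    (∀ u v, q (prec u v) = prec (q u) (q v)) ∧
    (∀ u v, q (succ u v) = succ (q u) (q v)) ∧
    (∀ u v, q (vee u v) = vee (q u) (q v)) ∧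
    (∀ u v w, prec (prec u v) (q w) = prec (q u) (prec v w + succ v w + vee v w)) ∧
    (∀ u v w, prec (succ u v) (q w) = succ (q u) (prec v w)) ∧
    (∀ u v w, succ (prec u v + succ u v + vee u v) (q w) = succ (q u) (succ v w)) ∧
    (∀ u v w, vee (prec u v + succ u v + vee u v) (q w) + prec (vee u v) (q w)
        = succ (q u) (vee v w) + vee (q u) (prec v w + succ v w + vee v w)) := by
  intro prec succ vee
  have hR' : ∀ u v, mul (R u) (R v) = R (mr u (R v) + ml (R u) v + Φ (R u) (R v)) := by
    intro u v; rw [hR]; congr 1; abel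
  simp only [prec, succ, vee]
  refine ⟨?_, ?_, ?_, ?_, ?_, ?_, ?_⟩
  · intro u v; rw [hqr, hRq]
  · intro u v; rw [hql, hRq]
  · intro u v; rw [hc1, hRq, hRq]
  · intro u v w
    rw [hRq, ← hb1, hR']
  · intro u v w
    rw [hRq, ← hb2, hRq]
  · intro u v w
    rw [← hR', ← hb3, ← hRq]
  · intro u v w
    have h := hc2 (R u) (R v) (R w)
    rw [← hR' u v, ← hR' v w, hRq u, hRq w]
    rw [← sub_eq_zero, ← neg_eq_zero, ← h]
    abel
end

section
/- Let (L,·,p) be a Hom-associative algebra over 𝕂 and {N_α: L → L}_{α∈Ω} a Nijenhuis family operator on it. Define x ≺_α y = x·N_α(y), x ≻_α y = N_α(x)·y, and x ⋎_{α,β} y = −N_{αβ}(x·y). Then (L, {≺_α, ≻_α, ⋎_{α,β}}_{α,β∈Ω}, p) is a Hom-NS-family algebra. -/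
/-- a Nijenhuis family operator on a Hom-associative algebra induces
a Hom-NS-family algebra with `x ≺_α y = x·N_α(y)`, `x ≻_α y = N_α(x)·y` and
`x ⋎_{α,β} y = −N_{αβ}(x·y)`. -/
theorem nijenhuis_family_to_homNS_family
    {K : Type*} [Field K] [CharZero K] {Ω : Type*} [Semigroup Ω]
    {L : Type*} [AddCommGroup L] [Module K L]
    (mul : L →ₗ[K] L →ₗ[K] L) (p : L →ₗ[K] L)
    (hpm : ∀ x y, p (mul x y) = mul (p x) (p y))
    (hassoc : ∀ x y z, mul (p x) (mul y z) = mul (mul x y) (p z))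
    (N : Ω → L →ₗ[K] L)
    (hNp : ∀ (α : Ω) (x : L), p (N α x) = N α (p x))
    (hN : ∀ (α β : Ω) (x y : L),
      mul (N α x) (N β y)
        = N (α * β) (mul (N α x) y + mul x (N β y) - N (α * β) (mul x y))) :
    let prec : Ω → L → L → L := fun α x y => mul x (N α y)
    let succ : Ω → L → L → L := fun α x y => mul (N α x) y
    let vee : Ω → Ω → L → L → L := fun α β x y => -(N (α * β) (mul x y))
    (∀ (α : Ω) (x y : L), p (prec α x y) = prec α (p x) (p y)) ∧
    (∀ (α : Ω) (x y : L), p (succ α x y) = succ α (p x) (p y)) ∧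
    (∀ (α β : Ω) (x y : L), p (vee α β x y) = vee α β (p x) (p y)) ∧
    (∀ (α β : Ω) (x y z : L),
      prec (α * β) (p x) (prec β y z + succ α y z + vee α β y z)
        = prec β (prec α x y) (p z)) ∧
    (∀ (α β : Ω) (x y z : L),
      prec β (succ α x y) (p z) = succ α (p x) (prec β y z)) ∧
    (∀ (α β : Ω) (x y z : L),
      succ (α * β) (prec β x y + succ α x y + vee α β x y) (p z)
        = succ α (p x) (succ β y z)) ∧
    (∀ (α β γ : Ω) (x y z : L),
      succ α (p x) (vee β γ y z)
          + vee α (β * γ) (p x) (prec γ y z + succ β y z + vee β γ y z)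
        = prec γ (vee α β x y) (p z)
          + vee (α * β) γ (prec β x y + succ α x y + vee α β x y) (p z)) := by

  intro prec succ vee
  simp only [prec, succ, vee]
  refine ⟨?_, ?_, ?_, ?_, ?_, ?_, ?_⟩
  · intro α x y; rw [hpm, hNp]
  · intro α x y; rw [hpm, hNp]
  · intro α β x y; rw [map_neg, hNp, hpm]
  · intro α β x y z
    rw [show mul y (N β z) + mul (N α y) z + -(N (α * β) (mul y z))
        = mul (N α y) z + mul y (N β z) - N (α * β) (mul y z) by abel,
      ← hN, hassoc, hNp]
  · intro α β x y z
    simp only [← hNp]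
    rw [hassoc]
  · intro α β x y z
    rw [show mul x (N β y) + mul (N α x) y + -(N (α * β) (mul x y))
        = mul (N α x) y + mul x (N β y) - N (α * β) (mul x y) by abel,
      ← hN]
    simp only [← hNp]
    rw [hassoc]
  · intro α β γ x y z
    simp only [map_add, map_neg, map_sub, LinearMap.add_apply, LinearMap.neg_apply,
      LinearMap.sub_apply]
    rw [hN α (β * γ) (p x) (mul y z), hN (α * β) γ (mul x y) (p z)]
    simp only [mul_assoc, map_add, map_neg, map_sub, LinearMap.add_apply,
      LinearMap.neg_apply, LinearMap.sub_apply]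
    simp only [← hNp]
    simp only [hassoc]
    abel
end

section
/- Let (G, {≺_α, ≻_α, ⋎_{α,β}}_{α,β∈Ω}, p) be a Hom-NS-family algebra over 𝕂. Define bilinear operations x ∗_{α,β} y = x ≺_β y + x ≻_α y + x ⋎_{α,β} y for α,β ∈ Ω. Then (G, {∗_{α,β}}_{α,β∈Ω}, p) is a Hom-Ω-associative algebra: p(x ∗_{α,β} y) = p(x) ∗_{α,β} p(y) and p(x) ∗_{α,βγ} (y ∗_{β,γ} z) = (x ∗_{α,β} y) ∗_{αβ,γ} p(z) for all x,y,z ∈ G and α,β,γ ∈ Ω. -/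
/-- a Hom-NS-family algebra gives rise to a Hom-Ω-associative algebra
via `x ∗_{α,β} y = x ≺_β y + x ≻_α y + x ⋎_{α,β} y`. -/
theorem homNS_family_to_homOmegaAssociative
    {K : Type*} [Field K] [CharZero K] {Ω : Type*} [Semigroup Ω]
    {G : Type*} [AddCommGroup G] [Module K G]
    (prec succ : Ω → G →ₗ[K] G →ₗ[K] G) (vee : Ω → Ω → G →ₗ[K] G →ₗ[K] G)
    (p : G →ₗ[K] G)
    (hp1 : ∀ (α : Ω) (x y : G), p (prec α x y) = prec α (p x) (p y))
    (hp2 : ∀ (α : Ω) (x y : G), p (succ α x y) = succ α (p x) (p y))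
    (hp3 : ∀ (α β : Ω) (x y : G), p (vee α β x y) = vee α β (p x) (p y))
    (h1 : ∀ (α β : Ω) (x y z : G),
      prec (α * β) (p x) (prec β y z + succ α y z + vee α β y z)
        = prec β (prec α x y) (p z))
    (h2 : ∀ (α β : Ω) (x y z : G),
      prec β (succ α x y) (p z) = succ α (p x) (prec β y z))
    (h3 : ∀ (α β : Ω) (x y z : G),
      succ (α * β) (prec β x y + succ α x y + vee α β x y) (p z)
        = succ α (p x) (succ β y z))
    (h4 : ∀ (α β γ : Ω) (x y z : G),
      succ α (p x) (vee β γ y z)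
          + vee α (β * γ) (p x) (prec γ y z + succ β y z + vee β γ y z)
        = prec γ (vee α β x y) (p z)
          + vee (α * β) γ (prec β x y + succ α x y + vee α β x y) (p z)) :
    let star : Ω → Ω → G → G → G := fun α β x y => prec β x y + succ α x y + vee α β x y
    (∀ (α β : Ω) (x y : G), p (star α β x y) = star α β (p x) (p y)) ∧
    (∀ (α β γ : Ω) (x y z : G),
      star α (β * γ) (p x) (star β γ y z) = star (α * β) γ (star α β x y) (p z)) := by
  intro star
  constructor
  · intro α β x y
    simp [star, hp1, hp2, hp3]
  · intro α β γ x y z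
    have H1 := h1 β γ x y z
    have H2 := h2 α γ x y z
    have H3 := h3 α β x y z
    have H4 := h4 α β γ x y z
    simp only [star, map_add, LinearMap.add_apply] at *
    linear_combination (norm := abel) H1 - H2 - H3 + H4
end

section
/- Let (L,·,p) be a Hom-associative algebra over 𝕂, (V,·ₗ,·ᵣ,q) a bimodule over it, Φ a 2-cocycle of L with coefficients in V, and {R_α: V → L}_{α∈Ω} a Φ-twisted Rota-Baxter family operator. Define u ∗_{α,β} v = R_α(u)·ₗv + u·ᵣR_β(v) + Φ(R_α(u), R_β(v)). Then (V, {∗_{α,β}}_{α,β∈Ω}, q) is a Hom-Ω-associative algebra: q(u ∗_{α,β} v) = q(u) ∗_{α,β} q(v) and q(u) ∗_{α,βγ} (v ∗_{β,γ} w) = (u ∗_{α,β} v) ∗_{αβ,γ} q(w) for all u,v,w ∈ V and α,β,γ ∈ Ω. -/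
/-- a `Φ`-twisted Rota-Baxter family operator induces a
Hom-Ω-associative algebra structure on `V` via
`u ∗_{α,β} v = R_α(u)·ₗv + u·ᵣR_β(v) + Φ(R_α(u), R_β(v))`. -/
theorem twisted_rotaBaxter_family_to_homOmegaAssociative
    {K : Type*} [Field K] [CharZero K] {Ω : Type*} [Semigroup Ω]
    {L : Type*} [AddCommGroup L] [Module K L]
    {V : Type*} [AddCommGroup V] [Module K V]
    (mul : L →ₗ[K] L →ₗ[K] L) (p : L →ₗ[K] L)
    (hpm : ∀ x y, p (mul x y) = mul (p x) (p y))
    (hassoc : ∀ x y z, mul (p x) (mul y z) = mul (mul x y) (p z))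
    (ml : L →ₗ[K] V →ₗ[K] V) (mr : V →ₗ[K] L →ₗ[K] V) (q : V →ₗ[K] V)
    (hql : ∀ x u, q (ml x u) = ml (p x) (q u))
    (hqr : ∀ u x, q (mr u x) = mr (q u) (p x))
    (hb1 : ∀ u x y, mr (q u) (mul x y) = mr (mr u x) (p y))
    (hb2 : ∀ x u y, ml (p x) (mr u y) = mr (ml x u) (p y))
    (hb3 : ∀ x y u, ml (p x) (ml y u) = ml (mul x y) (q u))
    (Φ : L →ₗ[K] L →ₗ[K] V)
    (hc1 : ∀ x y, q (Φ x y) = Φ (p x) (p y))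
    (hc2 : ∀ x y z, ml (p x) (Φ y z) - mr (Φ x y) (p z) - Φ (mul x y) (p z)
        + Φ (p x) (mul y z) = 0)
    (R : Ω → V →ₗ[K] L)
    (hRq : ∀ (α : Ω) (u : V), R α (q u) = p (R α u))
    (hR : ∀ (α β : Ω) (u v : V),
      mul (R α u) (R β v)
        = R (α * β) (ml (R α u) v + mr u (R β v) + Φ (R α u) (R β v))) :
    let star : Ω → Ω → V → V → V :=
      fun α β u v => ml (R α u) v + mr u (R β v) + Φ (R α u) (R β v)
    (∀ (α β : Ω) (u v : V), q (star α β u v) = star α β (q u) (q v)) ∧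
    (∀ (α β γ : Ω) (u v w : V),
      star α (β * γ) (q u) (star β γ v w) = star (α * β) γ (star α β u v) (q w)) := by
  intro star
  constructor
  · intro α β u v
    simp only [star, map_add, hql, hqr, hc1, hRq]
  · intro α β γ u v w
    have h4 := hc2 (R α u) (R β v) (R γ w)
    simp only [star, map_add, LinearMap.add_apply, hRq, ← hR, hb1, hb2, hb3]
    rw [← sub_eq_zero]
    rw [← sub_eq_zero] at h4 ⊢
    abel_nf at h4 ⊢
    exact h4
end

section
/- Let (L,·,p) be a Hom-associative algebra over 𝕂, (V,·ₗ,·ᵣ,q) a bimodule over it, Φ a 2-cocycle of L with coefficients in V, and {R_α: V → L}_{α∈Ω} a Φ-twisted Rota-Baxter family operator. Endow V with the Hom-Ω-associative algebra structure u ∗_{α,β} v = R_α(u)·ₗv + u·ᵣR_β(v) + Φ(R_α(u), R_β(v)). Define bilinear maps u ◁_{α,β} x = R_α(u)·x − R_{αβ}(u·ᵣx) − R_{αβ}(Φ(R_α(u), x)) and x ▷_{α,β} u = x·R_β(u) − R_{αβ}(x·ₗu) − R_{αβ}(Φ(x, R_β(u))) for x ∈ L, u ∈ V, α,β ∈ Ω.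 Then (L, {▷_{α,β}, ◁_{α,β}}_{α,β∈Ω}, p) is a bimodule over the Hom-Ω-associative algebra (V, {∗_{α,β}}_{α,β∈Ω}, q); that is: p(u ◁_{α,β} x) = q(u) ◁_{α,β} p(x), p(x ▷_{α,β} u) = p(x) ▷_{α,β} q(u), p(x) ▷_{α,βγ} (u ∗_{β,γ} v) = (x ▷_{α,β} u) ▷_{αβ,γ} q(v), q(u) ◁_{α,βγ} (x ▷_{β,γ} v) = (u ◁_{α,β} x) ▷_{αβ,γ} q(v), and q(u) ◁_{α,βγ} (v ◁_{β,γ} x) = (u ∗_{α,β} v) ◁_{αβ,γ} p(x), for all x ∈ L, u,v ∈ V, α,β,γ ∈ Ω. -/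
set_option maxHeartbeats 1000000 in
/-- for a `Φ`-twisted Rota-Baxter family operator, `L` with the
actions `◁_{α,β}` and `▷_{α,β}` is a bimodule over the Hom-Ω-associative algebra
`(V, {∗_{α,β}}, q)`. -/
theorem bimodule_over_induced_homOmegaAssociative
    {K : Type*} [Field K] [CharZero K] {Ω : Type*} [Semigroup Ω]
    {L : Type*} [AddCommGroup L] [Module K L]
    {V : Type*} [AddCommGroup V] [Module K V]
    (mul : L →ₗ[K] L →ₗ[K] L) (p : L →ₗ[K] L)
    (hpm : ∀ x y, p (mul x y) = mul (p x) (p y))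
    (hassoc : ∀ x y z, mul (p x) (mul y z) = mul (mul x y) (p z))
    (ml : L →ₗ[K] V →ₗ[K] V) (mr : V →ₗ[K] L →ₗ[K] V) (q : V →ₗ[K] V)
    (hql : ∀ x u, q (ml x u) = ml (p x) (q u))
    (hqr : ∀ u x, q (mr u x) = mr (q u) (p x))
    (hb1 : ∀ u x y, mr (q u) (mul x y) = mr (mr u x) (p y))
    (hb2 : ∀ x u y, ml (p x) (mr u y) = mr (ml x u) (p y))
    (hb3 : ∀ x y u, ml (p x) (ml y u) = ml (mul x y) (q u))
    (Φ : L →ₗ[K] L →ₗ[K] V)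
    (hc1 : ∀ x y, q (Φ x y) = Φ (p x) (p y))
    (hc2 : ∀ x y z, ml (p x) (Φ y z) - mr (Φ x y) (p z) - Φ (mul x y) (p z)
        + Φ (p x) (mul y z) = 0)
    (R : Ω → V →ₗ[K] L)
    (hRq : ∀ (α : Ω) (u : V), R α (q u) = p (R α u))
    (hR : ∀ (α β : Ω) (u v : V),
      mul (R α u) (R β v)
        = R (α * β) (ml (R α u) v + mr u (R β v) + Φ (R α u) (R β v))) :
    let star : Ω → Ω → V → V → V :=
      fun α β u v => ml (R α u) v + mr u (R β v) + Φ (R α u) (R β v)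
    let lhd : Ω → Ω → V → L → L :=
      fun α β u x => mul (R α u) x - R (α * β) (mr u x) - R (α * β) (Φ (R α u) x)
    let rhd : Ω → Ω → L → V → L :=
      fun α β x u => mul x (R β u) - R (α * β) (ml x u) - R (α * β) (Φ x (R β u))
    (∀ (α β : Ω) (u : V) (x : L), p (lhd α β u x) = lhd α β (q u) (p x)) ∧
    (∀ (α β : Ω) (x : L) (u : V), p (rhd α β x u) = rhd α β (p x) (q u)) ∧
    (∀ (α β γ : Ω) (x : L) (u v : V),
      rhd α (β * γ) (p x) (star β γ u v) = rhd (α * β) γ (rhd α β x u) (q v)) ∧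
    (∀ (α β γ : Ω) (u : V) (x : L) (v : V),
      lhd α (β * γ) (q u) (rhd β γ x v) = rhd (α * β) γ (lhd α β u x) (q v)) ∧
    (∀ (α β γ : Ω) (u v : V) (x : L),
      lhd α (β * γ) (q u) (lhd β γ v x) = lhd (α * β) γ (star α β u v) (p x)) := by
  intro star lhd rhd
  have hc2' : ∀ x y z, ml (p x) (Φ y z)
      = mr (Φ x y) (p z) + Φ (mul x y) (p z) - Φ (p x) (mul y z) := by
    intro x y z
    have h := hc2 x y z
    apply eq_of_sub_eq_zero
    rw [← h]; abel
  refine ⟨?_, ?_, ?_, ?_, ?_⟩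
  · intro α β u x
    simp only [star, lhd, rhd, map_sub, hpm, ← hRq, hqr, hc1]
  · intro α β x u
    simp only [star, lhd, rhd, map_sub, hpm, ← hRq, hql, hc1]
  · intro α β γ x u v
    simp only [star, lhd, rhd]
    rw [← hR β γ u v]
    simp only [map_add, map_sub, LinearMap.add_apply, LinearMap.sub_apply]
    rw [hR (α*β) γ (ml x u) (q v), hR (α*β) γ (Φ x (R β u)) (q v)]
    simp only [map_add, map_sub, hRq, mul_assoc]
    rw [hassoc x (R β u) (R γ v)]
    simp only [hb1, hb2, hb3, hc2']
    simp only [map_add, map_sub]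
    abel
  · intro α β γ u x v
    simp only [star, lhd, rhd]
    simp only [map_add, map_sub, LinearMap.add_apply, LinearMap.sub_apply]
    rw [hR α (β*γ) (q u) (ml x v), hR α (β*γ) (q u) (Φ x (R γ v)),
      hR (α*β) γ (mr u x) (q v), hR (α*β) γ (Φ (R α u) x) (q v)]
    simp only [map_add, map_sub, hRq, mul_assoc]
    rw [hassoc (R α u) x (R γ v)]
    simp only [hb1, hb2, hb3, hc2']
    simp only [map_add, map_sub]
    abel
  · intro α β γ u v x
    simp only [star, lhd, rhd]
    rw [← hR α β u v]
    simp only [map_add, map_sub, LinearMap.add_apply, LinearMap.sub_apply]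
    rw [hR α (β*γ) (q u) (mr v x), hR α (β*γ) (q u) (Φ (R β v) x)]
    simp only [map_add, map_sub, hRq, mul_assoc]
    rw [hassoc (R α u) (R β v) x]
    simp only [hb1, hb2, hb3, hc2']
    simp only [map_add, map_sub]
    abel
end

section
/- Let (L,·,p) be a Hom-associative algebra over 𝕂, (V,·ₗ,·ᵣ,q) a bimodule over it, Φ a 2-cocycle of L with coefficients in V, and R = {R_α: V → L}_{α∈Ω} a Φ-twisted Rota-Baxter family operator. Let R¹ = {R¹_α: V → L}_{α∈Ω} be a family of linear maps. Then R + tR¹ (i.e., the family {R_α + tR¹_α}_{α∈Ω}) is a Φ-twisted Rota-Baxter family operator for every t ∈ 𝕂 if and only if R¹ satisfies: (a) R¹_α∘q = p∘R¹_α for all α ∈ Ω; (b) R¹_α(u)·R_β(v) + R_α(u)·R¹_β(v) = R¹_{αβ}(R_α(u)·ₗv + u·ᵣR_β(v) + Φ(R_α(u), R_β(v))) + R_{αβ}(R¹_α(u)·ₗv + u·ᵣR¹_β(v) + Φ(R¹_α(u), R_β(v)) + Φ(R_α(u), R¹_β(v))) for all u,v ∈ V, α,β ∈ Ω; and (c)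 R¹_α(u)·R¹_β(v) = R¹_{αβ}(R¹_α(u)·ₗv + u·ᵣR¹_β(v) + Φ(R¹_α(u), R_β(v)) + Φ(R_α(u), R¹_β(v))) + R_{αβ}(Φ(R¹_α(u), R¹_β(v))) and 0 = R¹_{αβ}(Φ(R¹_α(u), R¹_β(v))) for all u,v ∈ V, α,β ∈ Ω. -/
/-- If a cubic (without constant term) in `t` vanishes for all `t` in a char-zero field,
then all its coefficients vanish. -/
theorem cubic_eq_zero_aux {K : Type*} [Field K] [CharZero K] {M : Type*} [AddCommGroup M]
    [Module K M] (a b c : M) (h : ∀ t : K, t • a + (t^2) • b + (t^3) • c = 0) :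
    a = 0 ∧ b = 0 ∧ c = 0 := by
  have hb : b = 0 := by
    linear_combination (norm := module) (2⁻¹ : K) • h 1 + (2⁻¹ : K) • h (-1)
  have hc : c = 0 := by
    linear_combination (norm := module) (6⁻¹ : K) • h 2 - (3⁻¹ : K) • h 1 - (3⁻¹ : K) • hb
  have ha : a = 0 := by
    linear_combination (norm := module) h 1 - hb - hc
  exact ⟨ha, hb, hc⟩

/-- `R + tR¹` is a `Φ`-twisted Rota-Baxter family operator for every
`t ∈ 𝕂` if and only if `R¹` satisfies conditions (a), (b) and (c). -/
theorem infinitesimal_deformation_iff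
    {K : Type*} [Field K] [CharZero K] {Ω : Type*} [Semigroup Ω]
    {L : Type*} [AddCommGroup L] [Module K L]
    {V : Type*} [AddCommGroup V] [Module K V]
    (mul : L →ₗ[K] L →ₗ[K] L) (p : L →ₗ[K] L)
    (hpm : ∀ x y, p (mul x y) = mul (p x) (p y))
    (hassoc : ∀ x y z, mul (p x) (mul y z) = mul (mul x y) (p z))
    (ml : L →ₗ[K] V →ₗ[K] V) (mr : V →ₗ[K] L →ₗ[K] V) (q : V →ₗ[K] V)
    (hql : ∀ x u, q (ml x u) = ml (p x) (q u))
    (hqr : ∀ u x, q (mr u x) = mr (q u) (p x))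
    (hb1 : ∀ u x y, mr (q u) (mul x y) = mr (mr u x) (p y))
    (hb2 : ∀ x u y, ml (p x) (mr u y) = mr (ml x u) (p y))
    (hb3 : ∀ x y u, ml (p x) (ml y u) = ml (mul x y) (q u))
    (Φ : L →ₗ[K] L →ₗ[K] V)
    (hc1 : ∀ x y, q (Φ x y) = Φ (p x) (p y))
    (hc2 : ∀ x y z, ml (p x) (Φ y z) - mr (Φ x y) (p z) - Φ (mul x y) (p z)
        + Φ (p x) (mul y z) = 0)
    (R : Ω → V →ₗ[K] L)
    (hRq : ∀ (α : Ω) (u : V), R α (q u) = p (R α u))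
    (hR : ∀ (α β : Ω) (u v : V),
      mul (R α u) (R β v)
        = R (α * β) (ml (R α u) v + mr u (R β v) + Φ (R α u) (R β v)))
    (R₁ : Ω → V →ₗ[K] L) :
    -- R + tR¹ is a Φ-twisted Rota-Baxter family operator for all t ∈ K
    (∀ t : K,
      (∀ (α : Ω) (u : V), (R α + t • R₁ α) (q u) = p ((R α + t • R₁ α) u)) ∧
      (∀ (α β : Ω) (u v : V),
        mul ((R α + t • R₁ α) u) ((R β + t • R₁ β) v)
          = (R (α * β) + t • R₁ (α * β))
              (ml ((R α + t • R₁ α) u) v + mr u ((R β + t • R₁ β) v)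
                + Φ ((R α + t • R₁ α) u) ((R β + t • R₁ β) v))))
    ↔
    -- (a)
    ((∀ (α : Ω) (u : V), R₁ α (q u) = p (R₁ α u)) ∧
    -- (b)
    (∀ (α β : Ω) (u v : V),
      mul (R₁ α u) (R β v) + mul (R α u) (R₁ β v)
        = R₁ (α * β) (ml (R α u) v + mr u (R β v) + Φ (R α u) (R β v))
          + R (α * β) (ml (R₁ α u) v + mr u (R₁ β v)
              + Φ (R₁ α u) (R β v) + Φ (R α u) (R₁ β v))) ∧
    -- (c)
    (∀ (α β : Ω) (u v : V),
      mul (R₁ α u) (R₁ β v)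
        = R₁ (α * β) (ml (R₁ α u) v + mr u (R₁ β v)
              + Φ (R₁ α u) (R β v) + Φ (R α u) (R₁ β v))
          + R (α * β) (Φ (R₁ α u) (R₁ β v))) ∧
    (∀ (α β : Ω) (u v : V), (0 : L) = R₁ (α * β) (Φ (R₁ α u) (R₁ β v)))) := by
  constructor
  · intro H
    have key : ∀ (α β : Ω) (u v : V),
        (mul (R₁ α u) (R β v) + mul (R α u) (R₁ β v)
          - (R₁ (α * β) (ml (R α u) v) + R₁ (α * β) (mr u (R β v))
              + R₁ (α * β) (Φ (R α u) (R β v)))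
          - (R (α * β) (ml (R₁ α u) v) + R (α * β) (mr u (R₁ β v))
              + R (α * β) (Φ (R₁ α u) (R β v)) + R (α * β) (Φ (R α u) (R₁ β v))) = 0)
        ∧ (mul (R₁ α u) (R₁ β v)
          - (R₁ (α * β) (ml (R₁ α u) v) + R₁ (α * β) (mr u (R₁ β v))
              + R₁ (α * β) (Φ (R₁ α u) (R β v)) + R₁ (α * β) (Φ (R α u) (R₁ β v)))
          - R (α * β) (Φ (R₁ α u) (R₁ β v)) = 0)
        ∧ (- R₁ (α * β) (Φ (R₁ α u) (R₁ β v)) = 0) := by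
      intro α β u v
      have hR' := hR α β u v
      simp only [map_add] at hR'
      apply cubic_eq_zero_aux (K := K)
      intro t
      have h := (H t).2 α β u v
      simp only [LinearMap.add_apply, LinearMap.smul_apply, map_add, map_smul] at h
      linear_combination (norm := module) h - hR'
    refine ⟨?_, ?_, ?_, ?_⟩
    · intro α u
      have h := (H 1).1 α u
      simp only [LinearMap.add_apply, LinearMap.smul_apply, one_smul, map_add] at h
      linear_combination (norm := module) h - hRq α u
    · intro α β u v
      have h := (key α β u v).1
      simp only [map_add]
      linear_combination (norm := module) h
    · intro α β u v
      have h := (key α β u v).2.1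
      simp only [map_add]
      linear_combination (norm := module) h
    · intro α β u v
      have h := (key α β u v).2.2
      linear_combination (norm := module) h
  · rintro ⟨ha, hb, hc, hc0⟩ t
    constructor
    · intro α u
      simp only [LinearMap.add_apply, LinearMap.smul_apply, map_add, map_smul]
      rw [hRq, ha]
    · intro α β u v
      have hR' := hR α β u v
      simp only [map_add] at hR'
      have hb' := hb α β u v
      simp only [map_add] at hb'
      have hc' := hc α β u v
      simp only [map_add] at hc'
      have hc0' := hc0 α β u v
      simp only [LinearMap.add_apply, LinearMap.smul_apply, map_add, map_smul]
      linear_combination (norm := module) hR' + t • hb' + (t^2 : K) • hc' + (t^3 : K) • hc0'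
end
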